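/- arXiv:1902.00270 — 4 statements merged into one kernel-verified Lean document; each statement's English description precedes it below -/
import Mathlib

section
/- There exists a constant C > 0 such that for all real numbers α, β with 0 < β − α < 2π and every real number t ≥ 1, | ∫_ℝ Σ_{k∈ℤ} 𝟙_{(α+2kπ)/t ≤ x ≤ (β+2kπ)/t}·e^{−x²/2} dx/√(2π) − (β − α)/(2π) | ≤ (C/t)·(β − α). In other words, the probability that a standard real Gaussian variable X satisfies tX mod 2π ∈ [α, β] differs from (β−α)/(2π) by at most C(β−α)/t. -/
open MeasureTheory ProbabilityTheory Real Filter Topology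

noncomputable section

/-- A smooth orientation-preserving expanding circle map of degree `deg ≥ 2`,
given by its lift to `ℝ`. -/
structure ExpandingCircleMap where
  lift : ℝ → ℝ
  deg : ℕ
  two_le_deg : 2 ≤ deg
  smooth : ContDiff ℝ (⊤ : ℕ∞) lift
  lift_add_one : ∀ x : ℝ, lift (x + 1) = lift x + deg
  expanding : ∀ x : ℝ, 1 < deriv lift x

namespace ExpandingCircleMap

variable (E : ExpandingCircleMap)

/-- `M = sup E'`. -/
def M : ℝ := ⨆ x : ℝ, deriv E.lift x

/-- `m = inf E'`. -/
def mE : ℝ := ⨅ x : ℝ, deriv E.lift x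

/-- The set of representatives in `[0,1)` of fixed points of `E^n` on the circle. -/
def Fix (n : ℕ) : Set ℝ :=
  {x | x ∈ Set.Ico (0 : ℝ) 1 ∧ ∃ k : ℤ, E.lift^[n] x = x + (k : ℝ)}

/-- Birkhoff sum `φ^n_x`. -/
def birkhoff (φ : ℝ → ℝ) (n : ℕ) (x : ℝ) : ℝ :=
  ∑ j ∈ Finset.range n, φ (E.lift^[j] x)

/-- `(E^n)'(x)`. -/
def derivIter (n : ℕ) (x : ℝ) : ℝ := deriv (E.lift^[n]) x

/-- The prime period `l_x` of a periodic point `x`. -/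
def primePeriod (x : ℝ) : ℕ :=
  sInf {j : ℕ | 1 ≤ j ∧ ∃ k : ℤ, E.lift^[j] x = x + (k : ℝ)}

/-- `x` and `y` represent points of the same orbit of `E` on the circle. -/
def sameOrbit (x y : ℝ) : Prop := ∃ j : ℕ, ∃ k : ℤ, E.lift^[j] x = y + (k : ℝ)

/-- The normalizing amplitude
`A_n := (∑_{E^n x = x} l_x/((E^n)'(x)-1)²)^{-1/2}`. -/
def An (n : ℕ) : ℝ :=
  1 / Real.sqrt (∑' x : E.Fix n, (E.primePeriod x : ℝ) / (E.derivIter n x - 1) ^ 2)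

/-- A finite set `O ⊆ [0,1)` of representatives is an orbit of period (dividing) `n`:
it is a nonempty equivalence class of periodic points of period `n` for the
"same orbit" relation. Its cardinality is then the prime period of the orbit. -/
def IsOrbit (n : ℕ) (O : Finset ℝ) : Prop :=
  O.Nonempty ∧ ↑O ⊆ E.Fix n ∧ (∀ x ∈ O, ∀ y ∈ O, E.sameOrbit x y) ∧
    (∀ x ∈ O, ∀ y ∈ E.Fix n, E.sameOrbit x y → y ∈ O)

/-- The Birkhoff sum `φ^n_O` of an orbit (evaluated at some point of the orbit). -/
def orbitBirkhoff (φ : ℝ → ℝ) (n : ℕ) (O : Finset ℝ) : ℝ :=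
  if h : O.Nonempty then E.birkhoff φ n (O.min' h) else 0

/-- `J = log E'`. -/
def J : ℝ → ℝ := fun x => Real.log (deriv E.lift x)

/-- The condition (cond2): `n ≤ c log ξ / (log l + (k + 1/2 + ε/2) log M)`. -/
def cond2 (k : ℕ) (ε c : ℝ) (n : ℕ) (ξ : ℝ) : Prop :=
  (n : ℝ) ≤ c * Real.log ξ / (Real.log E.deg + ((k : ℝ) + 1 / 2 + ε / 2) * Real.log E.M)

end ExpandingCircleMap

/-- The standard complex Gaussian `𝒩_ℂ(0,1)`: the law of `U + iV` with `U, V`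
independent real centered Gaussians of variance `1/2`. -/
def stdComplexGaussian : Measure ℂ :=
  Measure.map (fun p : ℝ × ℝ => (p.1 : ℂ) + (p.2 : ℂ) * Complex.I)
    ((gaussianReal 0 (1 / 2)).prod (gaussianReal 0 (1 / 2)))

/-- The centered complex Gaussian law `𝒩_ℂ(0,v)`, i.e. `E[|z|²] = v`. -/
def complexGaussian (v : ℝ) : Measure ℂ :=
  Measure.map (fun z => (Real.sqrt v : ℂ) * z) stdComplexGaussian

/-- Condition (C) for two families of real random variables indexed by the
periodic orbits. Here `K_n(0) = M^{-n(2k+1+ε)}`, an orbit `O ∈ 𝒫_m` has `O.card = m`,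
and `X^n_O ∼ 𝒩(0, (n²/m) K_n(0))`, pairwise independence of the `X^n_O` over distinct
orbits, and independence of each `X^n_O` from every `Y^n_{O''}`. -/
structure CondC (E : ExpandingCircleMap) (k : ℕ) (ε : ℝ)
    {Ω : Type*} [MeasurableSpace Ω] (P : Measure Ω)
    (X Y : ℕ → Finset ℝ → Ω → ℝ) : Prop where
  law_X : ∀ n, 1 ≤ n → ∀ O : Finset ℝ, E.IsOrbit n O →
    Measure.map (X n O) P = gaussianReal 0
      (Real.toNNReal ((n : ℝ) ^ 2 / (O.card : ℝ) * E.M ^ (-(n : ℝ) * (2 * k + 1 + ε))))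
  indep_XX : ∀ n, 1 ≤ n → ∀ O O' : Finset ℝ, E.IsOrbit n O → E.IsOrbit n O' → O ≠ O' →
    IndepFun (X n O) (X n O') P
  indep_XY : ∀ n, 1 ≤ n → ∀ O O'' : Finset ℝ, E.IsOrbit n O → E.IsOrbit n O'' →
    IndepFun (X n O) (Y n O'') P

/-- The indicator of the open arc `{e^{iθ} : α < θ < β}` of the unit circle, as a
`2π`-periodic function of the angle. -/
def arcIndicator (α β θ : ℝ) : ℝ :=
  Set.indicator {t : ℝ | ∃ k : ℤ, α + 2 * Real.pi * k < t ∧ t < β + 2 * Real.pi * k}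
    (fun _ => (1 : ℝ)) θ

/-- A step function on the circle (as a `2π`-periodic function of the angle):
a finite linear combination of indicators of arcs. -/
def IsStepOnCircle (f : ℝ → ℂ) : Prop :=
  ∃ (N : ℕ) (lam : Fin N → ℂ) (a b : Fin N → ℝ),
    f = fun θ => ∑ q : Fin N, lam q * (arcIndicator (a q) (b q) θ : ℂ)


/-- A centered stationary Gaussian random field on the circle, described by its random
Fourier coefficients `c p` and their variances `σ p = E[|c_p|²]`: the `(c_p)_{p ≥ 1}`
are independent centered complex Gaussians, `c 0` is a real centered Gaussian
independent of them, `c_{-p} = conj (c_p)`, and the variances grow at most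
polynomially. -/
structure IsGaussianField {Ω : Type*} [MeasurableSpace Ω] (P : Measure Ω)
    (c : ℤ → Ω → ℂ) (σ : ℤ → ℝ) : Prop where
  meas : ∀ p : ℤ, Measurable (c p)
  symm : ∀ p : ℤ, c (-p) = fun ω => (starRingEnd ℂ) (c p ω)
  indep : iIndepFun (fun p : ℕ => c (p : ℤ)) P
  law_pos : ∀ p : ℤ, 1 ≤ p → Measure.map (c p) P = complexGaussian (σ p)
  law_zero : Measure.map (c 0) P =
    Measure.map (Complex.ofReal) (gaussianReal 0 (Real.toNNReal (σ 0)))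
  sigma_symm : ∀ p : ℤ, σ (-p) = σ p
  sigma_nonneg : ∀ p : ℤ, 0 ≤ σ p
  poly_growth : ∃ C d : ℝ, ∀ p : ℤ, σ p ≤ C * (1 + |(p : ℝ)|) ^ d

/-- The realization `x ↦ ∑_p c_p(ω) e^{2iπpx}` of a random Fourier series, as a real
valued function (the sum being real for a symmetric family of coefficients). -/
def fieldEval (c : ℤ → ℂ) (x : ℝ) : ℝ :=
  (∑' p : ℤ, c p * Complex.exp (2 * Real.pi * p * x * Complex.I)).re

/-- The `p`-th Fourier coefficient `∫_𝕋 φ(x) e^{-2iπpx} dx` of a function on the circle. -/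
def fourierCoefficient (φ : ℝ → ℂ) (p : ℤ) : ℂ :=
  ∫ x in (0 : ℝ)..1, φ x * Complex.exp (-(2 * Real.pi * p * x) * Complex.I)

/-- The uniform (normalized Haar) probability measure on the unit circle `S¹ ⊆ ℂ`. -/
def circleUniform : Measure ℂ :=
  (ENNReal.ofReal (2 * Real.pi))⁻¹ •
    Measure.map (fun θ : ℝ => Complex.exp (θ * Complex.I))
      (MeasureTheory.volume.restrict (Set.Ioc 0 (2 * Real.pi)))

namespace St5
open MeasureTheory Set

noncomputable def phi (x : ℝ) : ℝ := Real.exp (-x^2/2) / Real.sqrt (2*Real.pi)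
noncomputable def gg (x : ℝ) : ℝ := |x| * phi x

lemma phi_nonneg (x : ℝ) : 0 ≤ phi x := by unfold phi; positivity
lemma gg_nonneg (x : ℝ) : 0 ≤ gg x := mul_nonneg (abs_nonneg _) (phi_nonneg x)

lemma phi_eq : phi = fun x => Real.exp (-(1/2) * x^2) / Real.sqrt (2*Real.pi) := by
  funext x; unfold phi; ring_nf

lemma hasDerivAt_phi (x : ℝ) : HasDerivAt phi (-x * phi x) x := by
  have h1 : HasDerivAt (fun y : ℝ => -y^2/2) (-x) x := by
    have := ((hasDerivAt_pow 2 x).neg).div_const 2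
    exact this.congr_deriv (by norm_num; ring)
  have h2 := (h1.exp).div_const (Real.sqrt (2*Real.pi))
  have h3 : -x * phi x = Real.exp (-x^2/2) * (-x) / Real.sqrt (2*Real.pi) := by unfold phi; ring
  rw [h3]; exact h2

lemma integrable_phi : Integrable phi := by
  rw [phi_eq]
  exact (integrable_exp_neg_mul_sq (by norm_num : (0:ℝ) < 1/2)).div_const _

lemma integrable_gg : Integrable gg := by
  have h := ((integrable_mul_exp_neg_mul_sq (by norm_num : (0:ℝ) < 1/2)).abs).div_const
    (Real.sqrt (2*Real.pi))
  apply h.congr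
  filter_upwards with x
  rw [abs_mul, abs_of_nonneg (Real.exp_pos _).le]
  unfold gg phi; rw [mul_div_assoc]; ring_nf

lemma integral_phi : ∫ x, phi x = 1 := by
  rw [phi_eq]
  rw [integral_div, integral_gaussian]
  rw [show Real.pi / (1/2) = 2 * Real.pi by ring]
  exact div_self (ne_of_gt (Real.sqrt_pos.2 (by positivity)))

lemma osc {a b x y : ℝ} (hx : x ∈ Icc a b) (hy : y ∈ Icc a b) :
    |phi x - phi y| ≤ ∫ z in Icc a b, gg z := by
  have hcont : Continuous fun t : ℝ => -t * phi t := by unfold phi; fun_prop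
  have heq : ∫ t in y..x, -t * phi t = phi x - phi y :=
    intervalIntegral.integral_eq_sub_of_hasDerivAt (fun t _ => hasDerivAt_phi t)
      (hcont.intervalIntegrable _ _)
  rw [← heq]
  have habs : (fun t : ℝ => |(-t * phi t)|) = gg := by
    funext t; rw [abs_mul, abs_neg, abs_of_nonneg (phi_nonneg t)]; rfl
  calc |∫ t in y..x, -t * phi t| ≤ ∫ t in Set.uIoc y x, ‖-t * phi t‖ := by
        rw [← Real.norm_eq_abs]
        exact intervalIntegral.norm_integral_le_integral_norm_uIoc
    _ = ∫ t in Set.uIoc y x, gg t := setIntegral_congr_fun measurableSet_uIoc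
        (fun t _ => by simp [gg, Real.norm_eq_abs, abs_mul, abs_of_nonneg (phi_nonneg t)])
    _ ≤ ∫ z in Icc a b, gg z := by
        apply setIntegral_mono_set integrable_gg.integrableOn
          (Filter.Eventually.of_forall fun t => gg_nonneg t)
        apply Filter.Eventually.of_forall
        intro t ht
        exact (Set.uIcc_subset_Icc hy hx) (Set.Ioc_subset_Icc_self ht)

lemma key {a L h : ℝ} (hL : 0 < L) (hLh : L ≤ h) :
    |(∫ x in Icc a (a+L), phi x) - L/h * ∫ x in Icc a (a+h), phi x|
      ≤ L * ∫ x in Icc a (a+h), gg x := by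
  set G := ∫ x in Icc a (a+h), gg x with hG
  set P := ∫ x in Icc a (a+L), phi x with hP
  set Q := ∫ x in Icc a (a+h), phi x with hQ
  have hh : 0 < h := lt_of_lt_of_le hL hLh
  have hsub : Icc a (a+L) ⊆ Icc a (a+h) := Icc_subset_Icc le_rfl (by linarith)
  have volL : (volume (Icc a (a+L))).toReal = L := by
    rw [Real.volume_Icc, ENNReal.toReal_ofReal (by linarith)]; ring
  have volH : (volume (Icc a (a+h))).toReal = h := by
    rw [Real.volume_Icc, ENNReal.toReal_ofReal (by linarith)]; ring
  -- Claim 1 : for y in the big interval, P ≤ L * (phi y + G) and L * (phi y - G) ≤ P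
  have claim : ∀ y ∈ Icc a (a+h), P ≤ L * (phi y + G) ∧ L * (phi y - G) ≤ P := by
    intro y hy
    constructor
    · have : P ≤ ∫ _x in Icc a (a+L), (phi y + G) := by
        apply setIntegral_mono_on integrable_phi.integrableOn
          (integrableOn_const (by rw [Real.volume_Icc]; exact ENNReal.ofReal_ne_top))
          measurableSet_Icc
        intro x hx
        have := osc (hsub hx) hy
        have h2 := (abs_le.1 this).2
        rw [← hG] at h2
        linarith
      rwa [setIntegral_const, measureReal_def, volL, smul_eq_mul] at this
    · have : (∫ _x in Icc a (a+L), (phi y - G)) ≤ P := by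
        apply setIntegral_mono_on
          (integrableOn_const (by rw [Real.volume_Icc]; exact ENNReal.ofReal_ne_top))
          integrable_phi.integrableOn measurableSet_Icc
        intro x hx
        have := osc (hsub hx) hy
        have h2 := (abs_le.1 this).1
        rw [← hG] at h2
        linarith
      rwa [setIntegral_const, measureReal_def, volL, smul_eq_mul] at this
  -- integrate over the big interval
  have up : Q ≤ h * (P/L + G) := by
    have : Q ≤ ∫ _x in Icc a (a+h), (P/L + G) := by
      apply setIntegral_mono_on integrable_phi.integrableOn
        (integrableOn_const (by rw [Real.volume_Icc]; exact ENNReal.ofReal_ne_top))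
        measurableSet_Icc
      intro y hy
      have := (claim y hy).2
      rw [mul_sub] at this
      rw [div_add' _ _ _ (ne_of_gt hL), le_div_iff₀ hL]
      nlinarith
    rwa [setIntegral_const, measureReal_def, volH, smul_eq_mul] at this
  have lo : h * (P/L - G) ≤ Q := by
    have : (∫ _x in Icc a (a+h), (P/L - G)) ≤ Q := by
      apply setIntegral_mono_on
        (integrableOn_const (by rw [Real.volume_Icc]; exact ENNReal.ofReal_ne_top))
        integrable_phi.integrableOn measurableSet_Icc
      intro y hy
      have := (claim y hy).1
      rw [div_sub' (ne_of_gt hL), div_le_iff₀ hL]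
      nlinarith
    rwa [setIntegral_const, measureReal_def, volH, smul_eq_mul] at this
  have e1 : L/h*(h*(P/L+G)) = P + L*G := by
    field_simp
  have e2 : L/h*(h*(P/L-G)) = P - L*G := by
    field_simp
  have u1 := mul_le_mul_of_nonneg_left up (le_of_lt (div_pos hL hh))
  have u2 := mul_le_mul_of_nonneg_left lo (le_of_lt (div_pos hL hh))
  rw [e1] at u1
  rw [e2] at u2
  rw [abs_le]
  constructor <;> linarith

end St5

/-- Lemma 3. There is `C > 0` such that for all `α, β` with
`0 < β - α < 2π` and all `t ≥ 1`, the probability that a standard Gaussian lies in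
`⋃_k [(α+2kπ)/t, (β+2kπ)/t]` differs from `(β-α)/(2π)` by at most `C(β-α)/t`. -/
theorem statement5 :
    ∃ C : ℝ, 0 < C ∧ ∀ α β t : ℝ, 0 < β - α → β - α < 2 * Real.pi → 1 ≤ t →
      |(∫ x in ⋃ k : ℤ, Set.Icc ((α + 2 * k * Real.pi) / t) ((β + 2 * k * Real.pi) / t),
            Real.exp (-x ^ 2 / 2) / Real.sqrt (2 * Real.pi)) -
          (β - α) / (2 * Real.pi)|
        ≤ C / t * (β - α) := by
  have hggint : 0 ≤ ∫ x, St5.gg x := integral_nonneg St5.gg_nonneg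
  refine ⟨(∫ x, St5.gg x) + 1, by linarith, ?_⟩
  intro α β t hαβ hlt ht
  have ht0 : 0 < t := lt_of_lt_of_le one_pos ht
  have hπ : 0 < Real.pi := Real.pi_pos
  set L : ℝ := (β - α) / t with hLdef
  set hs : ℝ := 2 * Real.pi / t with hsdef
  have hL : 0 < L := div_pos hαβ ht0
  have hLhs : L < hs := by
    rw [hLdef, hsdef]
    gcongr
  have hstep : 0 < hs := hL.trans hLhs
  set a : ℤ → ℝ := fun k => (α + 2 * (k : ℝ) * Real.pi) / t with hadef
  have haL : ∀ k : ℤ, (β + 2 * (k : ℝ) * Real.pi) / t = a k + L := by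
    intro k
    rw [hadef, hLdef]
    field_simp
    ring
  have hah : ∀ k : ℤ, a k + hs = a (k + 1) := by
    intro k
    rw [hadef, hsdef]
    push_cast
    field_simp
    ring
  have hmono : StrictMono a := by
    intro i j hij
    show (α + 2 * (i : ℝ) * Real.pi) / t < (α + 2 * (j : ℝ) * Real.pi) / t
    rw [div_lt_div_iff₀ ht0 ht0]
    have hij' : (i : ℝ) < j := by exact_mod_cast hij
    nlinarith [mul_pos (mul_pos (sub_pos.2 hij') hπ) ht0]
  set I : ℤ → Set ℝ := fun k => Set.Icc (a k) (a k + L) with hIdef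
  set J : ℤ → Set ℝ := fun k => Set.Ico (a k) (a (k + 1)) with hJdef
  have hIJ : ∀ k, I k ⊆ J k := by
    intro k
    show Set.Icc (a k) (a k + L) ⊆ Set.Ico (a k) (a (k + 1))
    rw [← hah k]
    exact Set.Icc_subset_Ico_right (by linarith)
  have hdisjJ : Pairwise (Function.onFun Disjoint J) := by
    have hd : ∀ i j : ℤ, i < j → Disjoint (J i) (J j) := by
      intro i j hij
      refine Set.disjoint_left.2 fun x hx1 hx2 => ?_
      simp only [hJdef, Set.mem_Ico] at hx1 hx2
      have hm := hmono.monotone (by omega : i + 1 ≤ j)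
      linarith [hx1.2, hx2.1]
    intro i j hij
    rcases hij.lt_or_gt with hlt2 | hlt2
    · exact hd i j hlt2
    · exact (hd j i hlt2).symm
  have hdisjI : Pairwise (Function.onFun Disjoint I) :=
    fun i j hij => ((hdisjJ hij).mono (hIJ i) (hIJ j))
  have hcover : (⋃ k : ℤ, J k) = Set.univ := by
    ext x
    simp only [Set.mem_iUnion, Set.mem_univ, iff_true, hJdef, Set.mem_Ico]
    refine ⟨⌊(t * x - α) / (2 * Real.pi)⌋, ?_, ?_⟩
    · rw [hadef]
      rw [div_le_iff₀ ht0]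
      have h1 := Int.floor_le ((t * x - α) / (2 * Real.pi))
      rw [le_div_iff₀ (by positivity)] at h1
      linarith
    · rw [hadef]
      rw [lt_div_iff₀ ht0]
      have h1 := Int.lt_floor_add_one ((t * x - α) / (2 * Real.pi))
      rw [div_lt_iff₀ (by positivity)] at h1
      push_cast
      linarith
  -- the three sums
  have hP : HasSum (fun k : ℤ => ∫ x in I k, St5.phi x) (∫ x in ⋃ k : ℤ, I k, St5.phi x) :=
    hasSum_integral_iUnion (fun k => measurableSet_Icc) hdisjI St5.integrable_phi.integrableOn
  have hQ : HasSum (fun k : ℤ => ∫ x in J k, St5.phi x) 1 := by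
    have h1 := hasSum_integral_iUnion (fun k : ℤ => measurableSet_Ico) hdisjJ
      (St5.integrable_phi.integrableOn (s := ⋃ k : ℤ, J k))
    rwa [hcover, Measure.restrict_univ, St5.integral_phi] at h1
  have hGs : HasSum (fun k : ℤ => ∫ x in J k, St5.gg x) (∫ x, St5.gg x) := by
    have h1 := hasSum_integral_iUnion (fun k : ℤ => measurableSet_Ico) hdisjJ
      (St5.integrable_gg.integrableOn (s := ⋃ k : ℤ, J k))
    rwa [hcover, Measure.restrict_univ] at h1
  -- the per-interval bound
  have hkey : ∀ k : ℤ, |(∫ x in I k, St5.phi x) - L / hs * ∫ x in J k, St5.phi x|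
      ≤ L * ∫ x in J k, St5.gg x := by
    intro k
    have h0 := St5.key (a := a k) hL hLhs.le
    have e3 : (∫ x in Set.Icc (a k) (a k + hs), St5.phi x) = ∫ x in J k, St5.phi x := by
      rw [hah k, integral_Icc_eq_integral_Ico]
    have e4 : (∫ x in Set.Icc (a k) (a k + hs), St5.gg x) = ∫ x in J k, St5.gg x := by
      rw [hah k, integral_Icc_eq_integral_Ico]
    rw [e3, e4] at h0
    exact h0
  -- assemble
  have hdiff : HasSum (fun k : ℤ => (∫ x in I k, St5.phi x) - L / hs * ∫ x in J k, St5.phi x)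
      ((∫ x in ⋃ k : ℤ, I k, St5.phi x) - L / hs * 1) := hP.sub (hQ.mul_left _)
  have hsummG : Summable fun k : ℤ => L * ∫ x in J k, St5.gg x := (hGs.mul_left L).summable
  have habs : Summable fun k : ℤ =>
      |(∫ x in I k, St5.phi x) - L / hs * ∫ x in J k, St5.phi x| :=
    Summable.of_nonneg_of_le (fun k => abs_nonneg _) hkey hsummG
  have h1 : |(∫ x in ⋃ k : ℤ, I k, St5.phi x) - L / hs * 1|
      ≤ ∑' k : ℤ, |(∫ x in I k, St5.phi x) - L / hs * ∫ x in J k, St5.phi x| := by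
    rw [← hdiff.tsum_eq, ← Real.norm_eq_abs]
    refine (norm_tsum_le_tsum_norm ?_).trans_eq ?_
    · simpa [Real.norm_eq_abs] using habs
    · simp [Real.norm_eq_abs]
  have h2 : (∑' k : ℤ, |(∫ x in I k, St5.phi x) - L / hs * ∫ x in J k, St5.phi x|)
      ≤ L * ∫ x, St5.gg x := by
    refine (Summable.tsum_le_tsum hkey habs hsummG).trans_eq ?_
    exact (hGs.mul_left L).tsum_eq
  -- rewrite the goal
  have hsetseq : (⋃ k : ℤ, Set.Icc ((α + 2 * (k : ℝ) * Real.pi) / t)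
      ((β + 2 * (k : ℝ) * Real.pi) / t)) = ⋃ k : ℤ, I k :=
    Set.iUnion_congr fun k => by rw [haL k]
  have hLhs2 : L / hs * 1 = (β - α) / (2 * Real.pi) := by
    rw [mul_one, hLdef, hsdef]
    rw [div_div_div_cancel_right₀]
    exact ne_of_gt ht0
  rw [hsetseq]
  have hgoal : |(∫ x in ⋃ k : ℤ, I k, St5.phi x) - (β - α) / (2 * Real.pi)|
      ≤ ((∫ x, St5.gg x) + 1) / t * (β - α) := by
    rw [← hLhs2]
    refine (h1.trans h2).trans ?_
    have e5 : ((∫ x, St5.gg x) + 1) / t * (β - α) = L * ((∫ x, St5.gg x) + 1) := by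
      rw [hLdef]; ring
    rw [e5]
    nlinarith
  exact hgoal


end
end

section
/- For every integer n ≥ 1, if x ≠ y are two distinct fixed points of E^n on 𝕋, then the circle distance d(x, y) is bounded below by 1/(M^n − 1). -/
open MeasureTheory ProbabilityTheory Real Filter Topology

noncomputable section

namespace ExpandingCircleMap

variable (E : ExpandingCircleMap)

lemma diff' : Differentiable ℝ E.lift := E.smooth.differentiable (by simp)

lemma periodic_sub : Function.Periodic (fun x => E.lift x - E.deg * x) 1 := by
  intro x
  simp only [E.lift_add_one x]
  ring

lemma lift_add_int (x : ℝ) (m : ℤ) : E.lift (x + m) = E.lift x + m * E.deg := by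
  have h := (E.periodic_sub.int_mul m) x
  simp only [mul_one] at h
  have h' : E.lift (x + m) - E.deg * (x + m) = E.lift x - E.deg * x := h
  linarith [h']

lemma iter_add_int (n : ℕ) (x : ℝ) (m : ℤ) :
    E.lift^[n] (x + m) = E.lift^[n] x + m * (E.deg : ℝ) ^ n := by
  induction n with
  | zero => simp
  | succ n ih =>
    rw [Function.iterate_succ_apply', Function.iterate_succ_apply', ih]
    have : (m : ℝ) * (E.deg : ℝ) ^ n = ((m * (E.deg : ℤ) ^ n : ℤ) : ℝ) := by push_cast; ring
    rw [this, E.lift_add_int]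
    push_cast
    ring

lemma deriv_periodic : Function.Periodic (deriv E.lift) 1 := by
  intro x
  have h1 : deriv (fun y => E.lift (y + 1)) x = deriv E.lift (x + 1) :=
    deriv_comp_add_const _ _ _
  have h2 : (fun y => E.lift (y + 1)) = fun y => E.lift y + E.deg := by
    funext y; exact E.lift_add_one y
  rw [h2] at h1
  rw [← h1, deriv_add_const]

lemma bddAbove_deriv : BddAbove (Set.range (deriv E.lift)) := by
  have hc : Continuous (deriv E.lift) := E.smooth.continuous_deriv (by simp)
  have hcomp : BddAbove (deriv E.lift '' Set.Icc 0 1) :=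
    (isCompact_Icc.image hc).bddAbove
  apply hcomp.mono
  rintro _ ⟨x, rfl⟩
  refine ⟨Int.fract x, ⟨Int.fract_nonneg x, (Int.fract_lt_one x).le⟩, ?_⟩
  have h := (E.deriv_periodic.int_mul ⌊x⌋) (Int.fract x)
  simp only [mul_one] at h
  rw [Int.fract_add_floor] at h
  exact h.symm

lemma le_M (x : ℝ) : deriv E.lift x ≤ E.M := le_ciSup E.bddAbove_deriv x

lemma one_lt_M : 1 < E.M := lt_of_lt_of_le (E.expanding 0) (E.le_M 0)

lemma deriv_iter_bounds (n : ℕ) (x : ℝ) :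
    1 ≤ deriv (E.lift^[n]) x ∧ deriv (E.lift^[n]) x ≤ E.M ^ n := by
  induction n generalizing x with
  | zero => simp
  | succ n ih =>
    have hd : deriv (E.lift^[n + 1]) x = deriv E.lift (E.lift^[n] x) * deriv (E.lift^[n]) x := by
      rw [Function.iterate_succ']
      exact deriv_comp x (E.diff' _) ((E.diff'.iterate n) x)
    obtain ⟨h1, h2⟩ := ih x
    have e1 : 1 < deriv E.lift (E.lift^[n] x) := E.expanding _
    have e2 : deriv E.lift (E.lift^[n] x) ≤ E.M := E.le_M _
    constructor
    · rw [hd]; nlinarith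
    · rw [hd, pow_succ]; nlinarith

lemma one_lt_deriv_iter (n : ℕ) (hn : 1 ≤ n) (x : ℝ) : 1 < deriv (E.lift^[n]) x := by
  obtain ⟨m, rfl⟩ := Nat.exists_eq_add_of_le hn
  have hd : deriv (E.lift^[1 + m]) x = deriv E.lift (E.lift^[m] x) * deriv (E.lift^[m]) x := by
    rw [add_comm, Function.iterate_succ']
    exact deriv_comp x (E.diff' _) ((E.diff'.iterate m) x)
  obtain ⟨h1, _⟩ := E.deriv_iter_bounds m x
  have e1 : 1 < deriv E.lift (E.lift^[m] x) := E.expanding _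
  rw [hd]; nlinarith

end ExpandingCircleMap

/-- Lemma `periodic`, second part. Two distinct fixed points of `E^n` on
the circle are at circle distance at least `1/(M^n - 1)`: any two representatives differ
by at least `1/(M^n - 1)` modulo `ℤ`. -/
theorem statement8 (E : ExpandingCircleMap) (n : ℕ) (hn : 1 ≤ n)
    (x y : ℝ) (hx : x ∈ E.Fix n) (hy : y ∈ E.Fix n) (hxy : x ≠ y) :
    ∀ k : ℤ, 1 / (E.M ^ n - 1) ≤ |x - y + (k : ℝ)| := by
  intro k
  obtain ⟨hx01, kx, hFx⟩ := hx
  obtain ⟨hy01, ky, hFy⟩ := hy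
  set F := E.lift^[n] with hF
  set y' := y - (k : ℝ) with hy'def
  have hFy' : F y' = y' + ((ky - k * ((E.deg : ℤ) ^ n - 1)) : ℤ) := by
    have h1 := E.iter_add_int n y (-k)
    have h2 : y + ((-k : ℤ) : ℝ) = y' := by push_cast; ring
    rw [h2] at h1
    rw [← hF] at h1
    rw [h1, hFy]
    push_cast
    ring
  have hd0 : x - y + (k : ℝ) ≠ 0 := by
    intro h
    have hk : |(k : ℝ)| < 1 := by
      rw [abs_lt]
      constructor <;> [nlinarith [hx01.1, hx01.2, hy01.1, hy01.2]; nlinarith [hx01.1, hx01.2, hy01.1, hy01.2]]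
    rw [← Int.cast_abs] at hk
    have hk' : |k| < 1 := by exact_mod_cast hk
    have : k = 0 := by have := abs_lt.mp hk'; omega
    subst this
    simp at h
    exact hxy (by linarith)
  have hxy' : x - y' = x - y + (k : ℝ) := by rw [hy'def]; ring
  have hcont : ∀ a b : ℝ, ContinuousOn F (Set.Icc a b) :=
    fun a b => (E.diff'.iterate n).continuous.continuousOn
  have hdiffOn : ∀ a b : ℝ, DifferentiableOn ℝ F (Set.Ioo a b) :=
    fun a b => (E.diff'.iterate n).differentiableOn
  have key : ∃ D : ℝ, 1 < D ∧ D ≤ E.M ^ n ∧ F x - F y' = D * (x - y') := by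
    rcases lt_trichotomy x y' with h | h | h
    · obtain ⟨c, _, hc⟩ := exists_deriv_eq_slope F h (hcont x y') (hdiffOn x y')
      refine ⟨deriv F c, E.one_lt_deriv_iter n hn c, (E.deriv_iter_bounds n c).2, ?_⟩
      rw [eq_div_iff (sub_ne_zero.2 h.ne')] at hc
      linear_combination hc
    · exfalso; exact hd0 (by rw [← hxy']; exact sub_eq_zero_of_eq h)
    · obtain ⟨c, _, hc⟩ := exists_deriv_eq_slope F h (hcont y' x) (hdiffOn y' x)
      refine ⟨deriv F c, E.one_lt_deriv_iter n hn c, (E.deriv_iter_bounds n c).2, ?_⟩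
      rw [eq_div_iff (sub_ne_zero.2 h.ne')] at hc
      linear_combination -hc
  obtain ⟨D, hD1, hDM, heq⟩ := key
  set mint : ℤ := kx - ky + k * ((E.deg : ℤ) ^ n - 1) with hmint
  have hm : (D - 1) * (x - y + (k : ℝ)) = (mint : ℝ) := by
    rw [hFx, hFy'] at heq
    rw [hmint]
    push_cast at heq ⊢
    rw [hy'def] at heq
    linear_combination -heq
  have hmne : (mint : ℝ) ≠ 0 := by
    rw [← hm]
    exact mul_ne_zero (by linarith) hd0
  have hm1 : (1 : ℝ) ≤ |(mint : ℝ)| := by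
    have : mint ≠ 0 := by exact_mod_cast hmne
    have := Int.one_le_abs this
    exact_mod_cast (by exact_mod_cast this : (1 : ℤ) ≤ |mint|)
  have habs : (D - 1) * |x - y + (k : ℝ)| = |(mint : ℝ)| := by
    rw [← hm, abs_mul, abs_of_pos (by linarith : (0 : ℝ) < D - 1)]
  have hpos : (0 : ℝ) < E.M ^ n - 1 := by linarith
  rw [div_le_iff₀ hpos]
  nlinarith [abs_nonneg (x - y + (k : ℝ)), mul_nonneg (abs_nonneg (x - y + (k : ℝ))) (sub_nonneg.2 hDM)]

end
end

section
/- Let τ ∈ C¹(𝕋), ξ ∈ ℝ and n ≥ 1. Let ρ ∈ C_c^∞(ℝ) with ∫_ℝ ρ = 1, and for ε > 0 let ρ_ε(t) := ε^{−1}ρ(t/ε), viewed (for ε small enough) as a smooth function on 𝕋 by periodization. Then the regularized flat trace ∫_𝕋 ρ_ε(y − E^n(y))·e^{iξ τ^n_y} dy converges, as ε → 0, to Σ_{y : E^n(y)=y} e^{iξτ^n_y}/((E^n)'(y) − 1). In particular the flat trace of ℒ^n_{ξ,τ} is well defined and equals this finite sum over the fixed points of E^n. -/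
open MeasureTheory ProbabilityTheory Real Filter Topology

noncomputable section

namespace Stmt12

variable {ρ : ℝ → ℝ} {ψ : ℝ → ℂ} {R : ℝ}

lemma moll_subst (hρ : Continuous ρ) (hψ : Continuous ψ) {ε : ℝ} (hε : 0 < ε)
    (c d kr : ℝ) :
    ∫ u in c..d, (ε⁻¹ * ρ ((kr - u)/ε)) • ψ u
      = ∫ t in (kr - d)/ε..(kr - c)/ε, ρ t • ψ (kr - ε * t) := by
  have h := intervalIntegral.integral_comp_smul_deriv
    (a := (kr - c)/ε) (b := (kr - d)/ε)
    (f := fun t => kr - ε * t) (f' := fun _ => -ε)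
    (g := fun u => (ε⁻¹ * ρ ((kr - u)/ε)) • ψ u)
    (fun x _ => by
      simpa using ((hasDerivAt_id x).const_mul ε).const_sub kr)
    continuousOn_const
    (by fun_prop)
  have h1 : kr - ε * ((kr - c)/ε) = c := by field_simp; ring
  have h2 : kr - ε * ((kr - d)/ε) = d := by field_simp; ring
  simp only [] at h
  rw [h1, h2] at h
  rw [← h]
  rw [intervalIntegral.integral_symm]
  rw [← intervalIntegral.integral_neg]
  apply intervalIntegral.integral_congr
  intro t _
  have h3 : (kr - (kr - ε * t))/ε = t := by field_simp; ring
  simp only [Function.comp]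
  rw [h3, smul_smul]
  have : -ε * (ε⁻¹ * ρ t) = -(ρ t) := by field_simp
  rw [this, neg_smul, neg_neg]

lemma moll_zero (hρ : Continuous ρ) (hψ : Continuous ψ) (hR : 0 < R)
    (hsupp : ∀ t, R ≤ |t| → ρ t = 0) {c d kr : ℝ} (hcd : c ≤ d)
    (hk : kr < c ∨ d < kr) :
    Tendsto (fun ε : ℝ => ∫ u in c..d, (ε⁻¹ * ρ ((kr - u)/ε)) • ψ u)
      (𝓝[>] 0) (𝓝 0) := by
  have key : ∀ᶠ ε in 𝓝[>] (0:ℝ),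
      (∫ u in c..d, (ε⁻¹ * ρ ((kr - u)/ε)) • ψ u) = 0 := by
    rcases hk with hk | hk
    · have hpos : 0 < (c - kr)/R := div_pos (by linarith) hR
      filter_upwards [Ioo_mem_nhdsGT_of_mem (Set.left_mem_Ico.2 hpos)] with ε hε
      rcases hε with ⟨hε0, hεlt⟩
      rw [moll_subst hρ hψ hε0]
      have hzero : ∀ t ∈ Set.uIcc ((kr - d)/ε) ((kr - c)/ε), ρ t • ψ (kr - ε * t) = (0:ℂ) := by
        intro t ht
        have h1 : (kr - c)/ε ≤ -R := by
          rw [div_le_iff₀ hε0]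
          have := (lt_div_iff₀ hR).mp hεlt
          nlinarith
        have h2 : (kr - d)/ε ≤ (kr - c)/ε := by
          gcongr
        rw [Set.uIcc_of_le h2] at ht
        have : t ≤ -R := le_trans ht.2 h1
        rw [hsupp t (by rw [abs_of_nonpos (by linarith)]; linarith), zero_smul]
      calc (∫ t in (kr - d)/ε..(kr - c)/ε, ρ t • ψ (kr - ε * t))
          = ∫ _t in (kr - d)/ε..(kr - c)/ε, (0:ℂ) := intervalIntegral.integral_congr hzero
        _ = 0 := intervalIntegral.integral_zero
    · have hpos : 0 < (kr - d)/R := div_pos (by linarith) hR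
      filter_upwards [Ioo_mem_nhdsGT_of_mem (Set.left_mem_Ico.2 hpos)] with ε hε
      rcases hε with ⟨hε0, hεlt⟩
      rw [moll_subst hρ hψ hε0]
      have hzero : ∀ t ∈ Set.uIcc ((kr - d)/ε) ((kr - c)/ε), ρ t • ψ (kr - ε * t) = (0:ℂ) := by
        intro t ht
        have h1 : R ≤ (kr - d)/ε := by
          rw [le_div_iff₀ hε0]
          have := (lt_div_iff₀ hR).mp hεlt
          nlinarith
        have h2 : (kr - d)/ε ≤ (kr - c)/ε := by
          gcongr
        rw [Set.uIcc_of_le h2] at ht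
        have : R ≤ t := le_trans h1 ht.1
        rw [hsupp t (by rw [abs_of_nonneg (by linarith)]; linarith), zero_smul]
      calc (∫ t in (kr - d)/ε..(kr - c)/ε, ρ t • ψ (kr - ε * t))
          = ∫ _t in (kr - d)/ε..(kr - c)/ε, (0:ℂ) := intervalIntegral.integral_congr hzero
        _ = 0 := intervalIntegral.integral_zero
  exact Tendsto.congr' (key.mono fun ε h => h.symm) tendsto_const_nhds


lemma moll_int (hρ : Continuous ρ) (hψ : Continuous ψ) (hR : 0 < R)
    (hsupp : ∀ t, R ≤ |t| → ρ t = 0) (hint : ∫ t : ℝ, ρ t = 1)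
    {c d kr : ℝ} (hc : c < kr) (hd : kr < d) :
    Tendsto (fun ε : ℝ => ∫ u in c..d, (ε⁻¹ * ρ ((kr - u)/ε)) • ψ u)
      (𝓝[>] 0) (𝓝 (ψ kr)) := by
  set ε₀ := min ((kr - c)/R) ((d - kr)/R) with hε₀
  have hε₀pos : 0 < ε₀ := lt_min (div_pos (by linarith) hR) (div_pos (by linarith) hR)
  have key : ∀ᶠ ε in 𝓝[>] (0:ℝ),
      (∫ u in c..d, (ε⁻¹ * ρ ((kr - u)/ε)) • ψ u)
        = ∫ t in Set.Ioc (-R) R, ρ t • ψ (kr - ε * t) := by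
    filter_upwards [Ioo_mem_nhdsGT_of_mem (Set.left_mem_Ico.2 hε₀pos)] with ε hε
    obtain ⟨hε0, hεlt⟩ := hε
    rw [moll_subst hρ hψ hε0]
    have hRt1 : R ≤ (kr - c)/ε := by
      rw [le_div_iff₀ hε0]
      have := (lt_div_iff₀ hR).mp (lt_of_lt_of_le hεlt (min_le_left _ _))
      nlinarith
    have hRt2 : (kr - d)/ε ≤ -R := by
      rw [div_le_iff₀ hε0]
      have := (lt_div_iff₀ hR).mp (lt_of_lt_of_le hεlt (min_le_right _ _))
      nlinarith
    have hcont : Continuous fun t => ρ t • ψ (kr - ε * t) := by fun_prop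
    have hRR : -R ≤ R := by linarith
    have i1 : IntervalIntegrable (fun t => ρ t • ψ (kr - ε * t)) volume ((kr-d)/ε) (-R) :=
      hcont.intervalIntegrable _ _
    have i2 : IntervalIntegrable (fun t => ρ t • ψ (kr - ε * t)) volume (-R) R :=
      hcont.intervalIntegrable _ _
    have i3 : IntervalIntegrable (fun t => ρ t • ψ (kr - ε * t)) volume R ((kr-c)/ε) :=
      hcont.intervalIntegrable _ _
    have z1 : (∫ t in (kr-d)/ε..(-R), ρ t • ψ (kr - ε * t)) = 0 := by
      have : ∀ t ∈ Set.uIcc ((kr-d)/ε) (-R), ρ t • ψ (kr - ε * t) = (0:ℂ) := by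
        intro t ht
        rw [Set.uIcc_of_le hRt2] at ht
        rw [hsupp t (by rw [abs_of_nonpos (by linarith [ht.2])]; linarith [ht.2]), zero_smul]
      rw [intervalIntegral.integral_congr this, intervalIntegral.integral_zero]
    have z3 : (∫ t in R..((kr-c)/ε), ρ t • ψ (kr - ε * t)) = 0 := by
      have : ∀ t ∈ Set.uIcc R ((kr-c)/ε), ρ t • ψ (kr - ε * t) = (0:ℂ) := by
        intro t ht
        rw [Set.uIcc_of_le hRt1] at ht
        rw [hsupp t (by rw [abs_of_nonneg (by linarith [ht.1])]; linarith [ht.1]), zero_smul]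
      rw [intervalIntegral.integral_congr this, intervalIntegral.integral_zero]
    have split : (∫ t in (kr-d)/ε..((kr-c)/ε), ρ t • ψ (kr - ε * t))
        = (∫ t in (kr-d)/ε..(-R), ρ t • ψ (kr - ε * t))
          + (∫ t in (-R)..R, ρ t • ψ (kr - ε * t))
          + (∫ t in R..((kr-c)/ε), ρ t • ψ (kr - ε * t)) := by
      rw [intervalIntegral.integral_add_adjacent_intervals i1 i2,
        intervalIntegral.integral_add_adjacent_intervals (i1.trans i2) i3]
    rw [split, z1, z3, zero_add, add_zero, intervalIntegral.integral_of_le hRR]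
  have lim : Tendsto (fun ε : ℝ => ∫ t in Set.Ioc (-R) R, ρ t • ψ (kr - ε * t))
      (𝓝[>] 0) (𝓝 (ψ kr)) := by
    obtain ⟨C, hC⟩ := (isCompact_Icc (a := kr - R) (b := kr + R)).exists_bound_of_continuousOn
      hψ.continuousOn
    have hmain : Tendsto (fun ε : ℝ => ∫ t in Set.Ioc (-R) R, ρ t • ψ (kr - ε * t))
        (𝓝[>] 0) (𝓝 (∫ t in Set.Ioc (-R) R, ρ t • ψ kr)) := by
      apply tendsto_integral_filter_of_dominated_convergence
        (bound := fun t => |ρ t| * C)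
      · filter_upwards with ε
        exact ((hρ.smul (hψ.comp (by fun_prop))).aestronglyMeasurable).restrict
      · filter_upwards [Ioo_mem_nhdsGT_of_mem (Set.left_mem_Ico.2 one_pos)] with ε hε
        filter_upwards [ae_restrict_mem measurableSet_Ioc] with t ht
        obtain ⟨hε0, hε1⟩ := hε
        have habs : |t| ≤ R := abs_le.2 ⟨ht.1.le, ht.2⟩
        have hmem : kr - ε * t ∈ Set.Icc (kr - R) (kr + R) := by
          have : |ε * t| ≤ R := by
            rw [abs_mul, abs_of_pos hε0]
            nlinarith [abs_nonneg t]
          have := abs_le.1 this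
          constructor <;> [linarith [this.2]; linarith [this.1]]
        calc ‖ρ t • ψ (kr - ε * t)‖ = |ρ t| * ‖ψ (kr - ε * t)‖ := by
              rw [norm_smul, Real.norm_eq_abs]
          _ ≤ |ρ t| * C := by
              have := hC _ hmem
              have := abs_nonneg (ρ t)
              nlinarith
      · exact ((hρ.abs.mul continuous_const).integrableOn_Ioc)
      · filter_upwards with t
        have h1 : Tendsto (fun ε : ℝ => kr - ε * t) (𝓝[>] 0) (𝓝 kr) := by
          have : Tendsto (fun ε : ℝ => kr - ε * t) (𝓝 0) (𝓝 (kr - 0 * t)) := by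
            exact (continuous_const.sub (continuous_id.mul continuous_const)).tendsto 0
          simpa using this.mono_left nhdsWithin_le_nhds
        exact Tendsto.smul tendsto_const_nhds ((hψ.tendsto kr).comp h1)
    have hval : (∫ t in Set.Ioc (-R) R, ρ t • ψ kr) = ψ kr := by
      rw [integral_smul_const]
      have hIoc : (∫ t in Set.Ioc (-R) R, ρ t) = 1 := by
        have hsub : Function.support ρ ⊆ Set.Ioc (-R) R := by
          intro t ht
          by_contra hmem
          apply ht
          apply hsupp
          simp only [Set.mem_Ioc, not_and_or, not_lt, not_le] at hmem
          rcases hmem with h | h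
          · rw [abs_of_nonpos (by linarith)]; linarith
          · rw [abs_of_nonneg (by linarith)]; linarith
        rw [← intervalIntegral.integral_of_le (by linarith : -R ≤ R),
          intervalIntegral.integral_eq_integral_of_support_subset hsub, hint]
      rw [hIoc, one_smul]
    rwa [hval] at hmain
  exact Tendsto.congr' (key.mono fun ε h => h.symm) lim


variable (E : ExpandingCircleMap)

lemma smooth_iterate (n : ℕ) : ContDiff ℝ (⊤ : ℕ∞) (E.lift^[n]) := by
  induction n with
  | zero => simpa using contDiff_id
  | succ n ih => rw [Function.iterate_succ]; exact ih.comp E.smooth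

lemma deriv_lift_iterate (n : ℕ) (x : ℝ) :
    deriv (E.lift^[n+1]) x = deriv (E.lift^[n]) (E.lift x) * deriv E.lift x := by
  rw [Function.iterate_succ]
  exact deriv_comp x ((smooth_iterate E n).differentiable (by simp) _)
    (E.smooth.differentiable (by simp) _)

lemma one_lt_deriv_iterate {n : ℕ} (hn : 1 ≤ n) (x : ℝ) :
    1 < deriv (E.lift^[n]) x := by
  induction n generalizing x with
  | zero => omega
  | succ n ih =>
    rcases Nat.eq_or_lt_of_le hn with h | h
    · simp only [← h]
      simpa using E.expanding x
    · have hn' : 1 ≤ n := by omega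
      rw [deriv_lift_iterate]
      nlinarith [ih hn' (E.lift x), E.expanding x, ih hn' x]

lemma lift_add_nat (m : ℕ) (x : ℝ) :
    E.lift (x + m) = E.lift x + m * E.deg := by
  induction m with
  | zero => simp
  | succ m ih =>
    have : (x + (m+1:ℕ) : ℝ) = (x + m) + 1 := by push_cast; ring
    rw [this, E.lift_add_one, ih]
    push_cast; ring

lemma iterate_add_nat (n : ℕ) (m : ℕ) (x : ℝ) :
    E.lift^[n] (x + m) = E.lift^[n] x + m * (E.deg : ℝ)^n := by
  induction n generalizing x m with
  | zero => simp
  | succ n ih =>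
    rw [Function.iterate_succ', Function.comp_apply, Function.comp_apply, ih,
      show (E.lift^[n] x + (m : ℝ) * (E.deg:ℝ)^n) = E.lift^[n] x + (m * E.deg^n : ℕ) by push_cast; ring,
      lift_add_nat]
    push_cast; ring

lemma iterate_add_one (n : ℕ) (x : ℝ) :
    E.lift^[n] (x + 1) = E.lift^[n] x + (E.deg : ℝ)^n := by
  simpa using iterate_add_nat E n 1 x

lemma deriv_iterate_periodic (n : ℕ) (x : ℝ) :
    deriv (E.lift^[n]) (x + 1) = deriv (E.lift^[n]) x := by
  have : deriv (fun y => E.lift^[n] (y + 1)) x = deriv (E.lift^[n]) (x + 1) := by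
    simpa using deriv_comp_add_const (E.lift^[n]) 1 x
  rw [← this]
  have heq : (fun y => E.lift^[n] (y + 1)) = fun y => E.lift^[n] y + (E.deg : ℝ)^n := by
    funext y; exact iterate_add_one E n y
  rw [heq]
  simp

lemma birkhoff_periodic (τ : ℝ → ℝ) (hper : Function.Periodic τ 1) (n : ℕ) (x : ℝ) :
    E.birkhoff τ n (x + 1) = E.birkhoff τ n x := by
  unfold ExpandingCircleMap.birkhoff
  apply Finset.sum_congr rfl
  intro j _
  rw [iterate_add_one]
  have := (hper.nat_mul (E.deg ^ j)) (E.lift^[j] x)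
  simpa [mul_one] using this

lemma birkhoff_continuous (τ : ℝ → ℝ) (hτ : Continuous τ) (n : ℕ) :
    Continuous (E.birkhoff τ n) := by
  unfold ExpandingCircleMap.birkhoff
  exact continuous_finset_sum _ fun j _ =>
    hτ.comp ((smooth_iterate E j).continuous)

end Stmt12

set_option maxHeartbeats 2000000 in
/-- trace formula. For `τ ∈ C¹(𝕋)`, the regularized flat trace
`∫_𝕋 ρ_ε(y - E^n(y)) e^{iξτ^n_y} dy` converges as `ε → 0⁺` to
`Σ_{E^n y = y} e^{iξτ^n_y}/((E^n)'(y) - 1)`, where `ρ_ε(t) = ε⁻¹ρ(t/ε)` is periodized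
over the circle. -/
theorem statement12 (E : ExpandingCircleMap) (τ : ℝ → ℝ) (hτ : ContDiff ℝ 1 τ)
    (hper : Function.Periodic τ 1) (ξ : ℝ) (n : ℕ) (hn : 1 ≤ n)
    (ρ : ℝ → ℝ) (hρ : ContDiff ℝ (⊤ : ℕ∞) ρ) (hρc : HasCompactSupport ρ)
    (hρint : ∫ t : ℝ, ρ t = 1) :
    Filter.Tendsto
      (fun ε : ℝ =>
        ∫ y in Set.Ioc (0 : ℝ) 1,
          ((∑' k : ℤ, ε⁻¹ * ρ ((y - E.lift^[n] y + (k : ℝ)) / ε) : ℝ) : ℂ) *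
            Complex.exp (Complex.I * (ξ : ℂ) * (E.birkhoff τ n y : ℂ)))
      (𝓝[>] 0)
      (𝓝 (∑' x : E.Fix n,
        Complex.exp (Complex.I * (ξ : ℂ) * (E.birkhoff τ n x.1 : ℂ)) /
          ((E.derivIter n x.1 : ℂ) - 1))) := by
  classical
  have hFsm : ContDiff ℝ (⊤ : ℕ∞) (E.lift^[n]) := Stmt12.smooth_iterate E n
  set F : ℝ → ℝ := E.lift^[n] with hF
  have hFd : Differentiable ℝ F := hFsm.differentiable (by simp)
  have hFc : Continuous F := hFsm.continuous
  have hF1 : ∀ x, 1 < deriv F x := fun x => Stmt12.one_lt_deriv_iterate E hn x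
  have hFadd : ∀ x, F (x+1) = F x + (E.deg:ℝ)^n := fun x => Stmt12.iterate_add_one E n x
  have hF'per : ∀ x, deriv F (x+1) = deriv F x := fun x => Stmt12.deriv_iterate_periodic E n x
  have hF'cont : Continuous (deriv F) := hFsm.continuous_deriv (by simp)
  set g : ℝ → ℝ := fun y => F y - y with hgdef
  have hgc : Continuous g := hFc.sub continuous_id
  have hgderiv : ∀ x, HasDerivAt g (deriv F x - 1) x := fun x =>
    ((hFd x).hasDerivAt).sub (hasDerivAt_id x)
  have hgmono : StrictMono g := strictMono_of_deriv_pos (fun x => by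
    rw [(hgderiv x).deriv]; linarith [hF1 x])
  set Lr : ℝ := (E.deg:ℝ)^n - 1 with hLrdef
  set Lz : ℤ := (E.deg:ℤ)^n - 1 with hLzdef
  have hLz : (Lz : ℝ) = Lr := by rw [hLzdef, hLrdef]; push_cast; ring
  have hdeg2 : (2:ℝ) ≤ (E.deg:ℝ) := by exact_mod_cast E.two_le_deg
  have hLrpos : 0 < Lr := by
    rw [hLrdef]
    have h1 : (2:ℝ)^n ≤ (E.deg:ℝ)^n := pow_le_pow_left₀ (by norm_num) hdeg2 n
    have h2 : (2:ℝ)^1 ≤ (2:ℝ)^n := pow_le_pow_right₀ (by norm_num) hn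
    norm_num at h2; linarith
  have hgadd : ∀ x, g (x+1) = g x + Lr := fun x => by
    simp only [hgdef, hFadd x, hLrdef]; ring
  have hgsub : ∀ x, g (x-1) = g x - Lr := fun x => by
    have := hgadd (x-1); simp only [sub_add_cancel] at this; linarith
  have hgaddint : ∀ (m : ℤ) (x : ℝ), g (x + m) = g x + m * Lr := by
    intro m
    induction m using Int.induction_on with
    | zero => simp
    | succ m ih =>
        intro x
        have h : (x + ((m:ℤ)+1 : ℤ) : ℝ) = (x + (m:ℤ)) + 1 := by push_cast; ring
        rw [h, hgadd, ih]; push_cast; ring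
    | pred m ih =>
        intro x
        have h : (x + (-(m:ℤ)-1 : ℤ) : ℝ) = (x + (-(m:ℤ) : ℤ)) - 1 := by push_cast; ring
        rw [h, hgsub, ih]; push_cast; ring
  have hgsurj : Function.Surjective g := by
    apply hgc.surjective
    · apply tendsto_atTop_mono (fun y => ?_)
        (tendsto_atTop_add_const_left _ (g 0)
          ((tendsto_intCast_atTop_atTop.comp tendsto_floor_atTop).atTop_mul_const hLrpos))
      have h1 : g ((⌊y⌋ : ℤ) : ℝ) = g 0 + ⌊y⌋ * Lr := by
        have := hgaddint ⌊y⌋ 0; simpa using this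
      calc g 0 + (⌊y⌋:ℝ) * Lr = g ((⌊y⌋:ℤ):ℝ) := h1.symm
        _ ≤ g y := hgmono.monotone (Int.floor_le y)
    · apply tendsto_atBot_mono (fun y => ?_)
        (tendsto_atBot_add_const_left _ (g 0)
          (Tendsto.atBot_mul_const hLrpos
            (tendsto_intCast_atBot_iff.mpr (tendsto_atBot_add_const_right _ 1 tendsto_floor_atBot))))
      have h2 : g y ≤ g (((⌊y⌋ + 1 : ℤ)) : ℝ) := by
        apply hgmono.monotone
        push_cast
        exact (Int.lt_floor_add_one y).le
      have h1 := hgaddint (⌊y⌋ + 1) 0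
      rw [zero_add] at h1
      calc g y ≤ g (((⌊y⌋ + 1 : ℤ)) : ℝ) := h2
        _ = g 0 + ((⌊y⌋ + 1 : ℤ) : ℝ) * Lr := h1
  set oi : ℝ ≃o ℝ := StrictMono.orderIsoOfSurjective g hgmono hgsurj with hoidef
  set ginv : ℝ → ℝ := fun u => oi.symm u with hginvdef
  have hginv_cont : Continuous ginv := (OrderIso.continuous oi.symm)
  have hg_ginv : ∀ u, g (ginv u) = u := fun u => oi.apply_symm_apply u
  have hginv_g : ∀ x, ginv (g x) = x := fun x => oi.symm_apply_apply x
  set φ : ℝ → ℂ := fun y => Complex.exp (Complex.I * ξ * (E.birkhoff τ n y : ℂ)) with hφdef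
  have hφc : Continuous φ := by
    apply Complex.continuous_exp.comp
    exact continuous_const.mul
      (Complex.continuous_ofReal.comp (Stmt12.birkhoff_continuous E τ hτ.continuous n))
  have hφper : ∀ y, φ (y+1) = φ y := fun y => by
    simp only [hφdef, Stmt12.birkhoff_periodic E τ hper n y]
  set ψ : ℝ → ℂ := fun u => φ (ginv u) / ((deriv F (ginv u) - 1 : ℝ) : ℂ) with hψdef
  have hdne : ∀ x, ((deriv F x - 1 : ℝ) : ℂ) ≠ 0 := fun x => by
    rw [Ne, Complex.ofReal_eq_zero]
    linarith [hF1 x]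
  have hψc : Continuous ψ := by
    apply (hφc.comp hginv_cont).div
      (Complex.continuous_ofReal.comp ((hF'cont.sub continuous_const).comp hginv_cont))
    intro u
    exact hdne (ginv u)
  set W : ℝ → ℂ := fun x => φ x / ((deriv F x - 1 : ℝ) : ℂ) with hWdef
  have hWψ : ∀ x, W x = ψ (g x) := fun x => by simp only [hψdef, hWdef, hginv_g]
  have hWper : ∀ x, W (x+1) = W x := fun x => by
    simp only [hWdef, hφper x, hF'per x]
  -- support radius
  obtain ⟨r, hr⟩ : ∃ r, tsupport ρ ⊆ Metric.closedBall 0 r :=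
    (hρc.isBounded).subset_closedBall 0
  set R : ℝ := max r 0 + 1 with hRdef
  have hR : 0 < R := by
    have := le_max_right r 0; rw [hRdef]; linarith
  have hsupp : ∀ t, R ≤ |t| → ρ t = 0 := by
    intro t ht
    apply image_eq_zero_of_notMem_tsupport
    intro hmem
    have h1 := hr hmem
    rw [Metric.mem_closedBall, Real.dist_eq, sub_zero] at h1
    have h2 := le_max_left r 0
    rw [hRdef] at ht
    linarith
  -- choose a
  have hBfin : Set.Finite {y | y ∈ Set.Ioo (0:ℝ) 1 ∧ ∃ k : ℤ, g y = k} := by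
    apply Set.Finite.of_finite_image (f := fun y => ⌊g y⌋)
    · apply Set.Finite.subset (Set.finite_Icc ⌊g 0⌋ ⌊g 1⌋)
      rintro m ⟨y, ⟨hy, _⟩, rfl⟩
      exact Set.mem_Icc.2 ⟨Int.floor_le_floor (hgmono.monotone hy.1.le),
        Int.floor_le_floor (hgmono.monotone hy.2.le)⟩
    · rintro y ⟨_, ky, hky⟩ y' ⟨_, ky', hky'⟩ h
      simp only [hky, hky', Int.floor_intCast] at h
      apply hgmono.injective
      rw [hky, hky']; exact_mod_cast h
  obtain ⟨a, haIoo, haB⟩ : ∃ a, a ∈ Set.Ioo (0:ℝ) 1 ∧ ∀ k : ℤ, g a ≠ k := by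
    obtain ⟨a, ha⟩ := ((Set.Ioo_infinite (by norm_num : (0:ℝ) < 1)).diff hBfin).nonempty
    refine ⟨a, ha.1, fun k hk => ha.2 ⟨ha.1, k, hk⟩⟩
  have ha0 : 0 < a := haIoo.1
  have ha1 : a < 1 := haIoo.2
  have hga1B : ∀ k : ℤ, g (a+1) ≠ k := by
    intro k hk
    apply haB (k - Lz)
    rw [hgadd] at hk
    push_cast [hLz]
    linarith
  have hgaa1 : g a < g (a+1) := hgmono (by linarith)
  -- finsets of integers
  set K' : Finset ℤ := Finset.Ioc ⌊g a⌋ ⌊g (a+1)⌋ with hK'def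
  have hK'mem : ∀ k : ℤ, k ∈ K' ↔ g a < (k:ℝ) ∧ (k:ℝ) < g (a+1) := by
    intro k
    rw [hK'def, Finset.mem_Ioc]
    constructor
    · rintro ⟨h1, h2⟩
      constructor
      · have h3 := Int.lt_floor_add_one (g a)
        have h4 : ((⌊g a⌋ + 1 : ℤ):ℝ) ≤ (k:ℝ) := by exact_mod_cast h1
        push_cast at h4
        linarith
      · have h5 : (k:ℝ) ≤ g (a+1) := Int.le_floor.1 h2
        exact lt_of_le_of_ne h5 (fun he => hga1B k he.symm)
    · rintro ⟨h1, h2⟩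
      exact ⟨Int.floor_lt.2 h1, Int.le_floor.2 h2.le⟩
  obtain ⟨Cg, hCg⟩ := (isCompact_Icc (a := (-2:ℝ)) (b := 2)).exists_bound_of_continuousOn
    hgc.continuousOn
  set N : ℤ := ⌈|Cg| + R + 1⌉ with hNdef
  have hCgN : |Cg| + R + 1 ≤ (N:ℝ) := Int.le_ceil _
  set K : Finset ℤ := Finset.Icc (-N) N with hKdef
  have haIcc : a ∈ Set.Icc (-2:ℝ) 2 := ⟨by linarith, by linarith⟩
  have ha1Icc : a + 1 ∈ Set.Icc (-2:ℝ) 2 := ⟨by linarith, by linarith⟩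
  have hK'K : K' ⊆ K := by
    intro k hk
    rw [hK'mem k] at hk
    have hga : |g a| ≤ Cg := by
      have := hCg a haIcc; rwa [Real.norm_eq_abs] at this
    have hga1 : |g (a+1)| ≤ Cg := by
      have := hCg (a+1) ha1Icc; rwa [Real.norm_eq_abs] at this
    have hCgabs := le_abs_self Cg
    have h1 := abs_le.1 hga
    have h2 := abs_le.1 hga1
    rw [hKdef, Finset.mem_Icc]
    constructor
    · have : (-N : ℝ) ≤ (k:ℝ) := by push_cast; linarith [hk.1]
      exact_mod_cast this
    · have : (k:ℝ) ≤ (N : ℝ) := by linarith [hk.2]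
      exact_mod_cast this
  -- tsum equals finite sum
  have hts : ∀ ε : ℝ, 0 < ε → ε ≤ 1 → ∀ y ∈ Set.Icc (-2:ℝ) 2,
      (∑' k : ℤ, ε⁻¹ * ρ ((y - F y + k)/ε)) = ∑ k ∈ K, ε⁻¹ * ρ ((y - F y + k)/ε) := by
    intro ε hε0 hε1 y hy
    apply tsum_eq_sum
    intro k hk
    have hgy : |g y| ≤ Cg := by
      have := hCg y hy; rwa [Real.norm_eq_abs] at this
    have hkabs : (N:ℝ) + 1 ≤ |(k:ℝ)| := by
      rw [hKdef, Finset.mem_Icc, not_and_or] at hk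
      rcases hk with h | h
      · push_neg at h
        have h' : k ≤ -N - 1 := by omega
        have h'' : (k:ℝ) ≤ -(N:ℝ) - 1 := by exact_mod_cast h'
        calc (N:ℝ) + 1 ≤ -(k:ℝ) := by linarith
          _ ≤ |(k:ℝ)| := neg_le_abs _
      · push_neg at h
        have h' : N + 1 ≤ k := by omega
        have h'' : (N:ℝ) + 1 ≤ (k:ℝ) := by exact_mod_cast h'
        exact h''.trans (le_abs_self _)
    have hargeq : y - F y + (k:ℝ) = (k:ℝ) - g y := by simp only [hgdef]; ring
    have habs : R ≤ |(y - F y + (k:ℝ))/ε| := by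
      rw [abs_div, abs_of_pos hε0, le_div_iff₀ hε0, hargeq]
      have h3 : |(k:ℝ)| - |g y| ≤ |(k:ℝ) - g y| := abs_sub_abs_le_abs_sub _ _
      have h4 : R * ε ≤ R * 1 := by nlinarith
      have h5 := le_abs_self Cg
      linarith
    rw [hsupp _ habs, mul_zero]
  -- the fixed-point representative map
  set rep : ℤ → ℝ := fun k => if ginv (k:ℝ) < 1 then ginv (k:ℝ) else ginv (k:ℝ) - 1
    with hrepdef
  have hginvIoo : ∀ k : ℤ, k ∈ K' → ginv (k:ℝ) ∈ Set.Ioo a (a+1) := by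
    intro k hk
    rw [hK'mem] at hk
    constructor
    · have h : g a < g (ginv (k:ℝ)) := by rw [hg_ginv]; exact hk.1
      exact hgmono.lt_iff_lt.1 h
    · have h : g (ginv (k:ℝ)) < g (a+1) := by rw [hg_ginv]; exact hk.2
      exact hgmono.lt_iff_lt.1 h
  have hgFiff : ∀ (x : ℝ) (m : ℤ), F x = x + (m:ℝ) ↔ g x = (m:ℝ) := by
    intro x m
    simp only [hgdef]
    constructor <;> intro h <;> linarith
  have hrepFix : ∀ k ∈ K', rep k ∈ E.Fix n := by
    intro k hk
    obtain ⟨hu1, hu2⟩ := hginvIoo k hk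
    constructor
    · simp only [hrepdef]
      by_cases h : ginv (k:ℝ) < 1
      · rw [if_pos h]
        exact ⟨by linarith, h⟩
      · rw [if_neg h]
        push_neg at h
        exact ⟨by linarith, by linarith⟩
    · simp only [hrepdef]
      by_cases h : ginv (k:ℝ) < 1
      · rw [if_pos h]
        exact ⟨k, (hgFiff _ k).2 (hg_ginv _)⟩
      · rw [if_neg h]
        refine ⟨k - Lz, (hgFiff _ _).2 ?_⟩
        have : g (ginv (k:ℝ) - 1) = g (ginv (k:ℝ)) - Lr := hgsub _
        rw [this, hg_ginv]
        push_cast [hLz]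
        ring
  have hrepW : ∀ k ∈ K', W (rep k) = ψ (k:ℝ) := by
    intro k hk
    have hbase : W (ginv (k:ℝ)) = ψ (k:ℝ) := by rw [hWψ, hg_ginv]
    simp only [hrepdef]
    by_cases h : ginv (k:ℝ) < 1
    · rw [if_pos h] <;> exact hbase
    · rw [if_neg h]
      rw [← hbase]
      have h2 := hWper (ginv (k:ℝ) - 1)
      simpa using h2.symm
  have hrepInj : ∀ k1 ∈ K', ∀ k2 ∈ K', rep k1 = rep k2 → k1 = k2 := by
    intro k1 hk1 k2 hk2 h
    obtain ⟨h11, h12⟩ := hginvIoo k1 hk1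
    obtain ⟨h21, h22⟩ := hginvIoo k2 hk2
    have hinj : ginv (k1:ℝ) = ginv (k2:ℝ) → k1 = k2 := by
      intro he
      have : g (ginv (k1:ℝ)) = g (ginv (k2:ℝ)) := by rw [he]
      rw [hg_ginv, hg_ginv] at this
      exact_mod_cast this
    simp only [hrepdef] at h
    by_cases hc1 : ginv (k1:ℝ) < 1 <;> by_cases hc2 : ginv (k2:ℝ) < 1
    · rw [if_pos hc1, if_pos hc2] at h; exact hinj h
    · rw [if_pos hc1, if_neg hc2] at h; push_neg at hc2; exact absurd h (by intro hh; nlinarith)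
    · rw [if_neg hc1, if_pos hc2] at h; push_neg at hc1; exact absurd h (by intro hh; nlinarith)
    · rw [if_neg hc1, if_neg hc2] at h
      exact hinj (by linarith)
  have hFixEq : E.Fix n = ↑(K'.image rep) := by
    apply Set.Subset.antisymm
    · rintro x ⟨⟨hx0, hx1⟩, j, hj⟩
      rw [hgFiff] at hj
      have hxa : x ≠ a := fun he => haB j (he ▸ hj)
      set xt : ℝ := if a < x then x else x + 1 with hxtdef
      have hxt : a < xt ∧ xt < a + 1 := by
        rw [hxtdef]
        by_cases h : a < x
        · rw [if_pos h]; exact ⟨h, by linarith⟩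
        · rw [if_neg h]; push_neg at h
          have : x < a := lt_of_le_of_ne h hxa
          exact ⟨by linarith, by linarith⟩
      set kk : ℤ := if a < x then j else j + Lz with hkkdef
      have hgxt : g xt = (kk:ℝ) := by
        rw [hxtdef, hkkdef]
        by_cases h : a < x
        · rw [if_pos h, if_pos h]; exact hj
        · rw [if_neg h, if_neg h, hgadd, hj]; push_cast [hLz]; ring
      have hkkK' : kk ∈ K' := by
        rw [hK'mem, ← hgxt]
        exact ⟨hgmono hxt.1, hgmono hxt.2⟩
      have hginvkk : ginv (kk:ℝ) = xt := by
        rw [← hgxt, hginv_g]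
      have hrepkk : rep kk = x := by
        have hxtval : xt = x ∨ xt = x + 1 := by
          rw [hxtdef]
          by_cases h : a < x
          · left; rw [if_pos h]
          · right; rw [if_neg h]
        simp only [hrepdef, hginvkk]
        rcases hxtval with he | he
        · rw [he, if_pos hx1]
        · rw [he, if_neg (by linarith : ¬ (x + 1 < 1))]
          ring
      rw [Finset.coe_image]
      exact ⟨kk, hkkK', hrepkk⟩
    · intro x hx
      rw [Finset.coe_image] at hx
      obtain ⟨k, hk, rfl⟩ := hx
      exact hrepFix k (by exact_mod_cast hk)
  -- target sum identification
  have htarget : (∑' x : E.Fix n,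
      Complex.exp (Complex.I * (ξ:ℂ) * (E.birkhoff τ n x.1 : ℂ)) /
        ((E.derivIter n x.1 : ℂ) - 1)) = ∑ k ∈ K', ψ (k:ℝ) := by
    have hWx : ∀ x : ℝ, Complex.exp (Complex.I * (ξ:ℂ) * (E.birkhoff τ n x : ℂ)) /
        ((E.derivIter n x : ℂ) - 1) = W x := by
      intro x
      simp only [hWdef, hφdef]
      have hd : E.derivIter n x = deriv F x := rfl
      rw [hd]
      push_cast
      ring
    calc (∑' x : E.Fix n, Complex.exp (Complex.I * (ξ:ℂ) * (E.birkhoff τ n x.1 : ℂ)) /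
        ((E.derivIter n x.1 : ℂ) - 1))
        = ∑' x : E.Fix n, W x.1 := tsum_congr (fun x => hWx x.1)
      _ = ∑' x : (↑(K'.image rep) : Set ℝ), W x.1 := by rw [hFixEq]
      _ = ∑ x ∈ K'.image rep, W x := Finset.tsum_subtype' (K'.image rep) W
      _ = ∑ k ∈ K', W (rep k) := Finset.sum_image hrepInj
      _ = ∑ k ∈ K', ψ (k:ℝ) := Finset.sum_congr rfl hrepW
  -- main eventual identity
  have hIoo1 : Set.Ioo (0:ℝ) 1 ∈ 𝓝[>] (0:ℝ) :=
    Ioo_mem_nhdsGT_of_mem (Set.left_mem_Ico.2 one_pos)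
  have keymain : ∀ᶠ ε in 𝓝[>] (0:ℝ),
      (∫ y in Set.Ioc (0 : ℝ) 1,
          ((∑' k : ℤ, ε⁻¹ * ρ ((y - F y + (k : ℝ)) / ε) : ℝ) : ℂ) *
            Complex.exp (Complex.I * (ξ : ℂ) * (E.birkhoff τ n y : ℂ)))
        = ∑ k ∈ K, ∫ u in (g a)..(g (a+1)), (ε⁻¹ * ρ (((k:ℝ) - u)/ε)) • ψ u := by
    filter_upwards [hIoo1] with ε hε
    obtain ⟨hε0, hε1⟩ := hε
    set fε : ℝ → ℂ := fun y =>
      ((∑' k : ℤ, ε⁻¹ * ρ ((y - F y + (k : ℝ)) / ε) : ℝ) : ℂ) * φ y with hfεdef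
    have hfin : ∀ y ∈ Set.Icc (-2:ℝ) 2,
        fε y = ((∑ k ∈ K, ε⁻¹ * ρ ((y - F y + (k:ℝ))/ε) : ℝ) : ℂ) * φ y := by
      intro y hy
      simp only [hfεdef]
      rw [hts ε hε0 hε1.le y hy]
    have hfinc : Continuous fun y =>
        ((∑ k ∈ K, ε⁻¹ * ρ ((y - F y + (k:ℝ))/ε) : ℝ) : ℂ) * φ y := by
      apply Continuous.mul _ hφc
      apply Complex.continuous_ofReal.comp
      apply continuous_finset_sum
      intro k _
      exact continuous_const.mul
        (hρ.continuous.comp (((continuous_id.sub hFc).add continuous_const).div_const ε))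
    have hfεcont : ContinuousOn fε (Set.Icc (-2:ℝ) 2) :=
      (hfinc.continuousOn).congr hfin
    have hii : ∀ c d : ℝ, -2 ≤ c → c ≤ d → d ≤ 2 → IntervalIntegrable fε volume c d := by
      intro c d h1 h2 h3
      apply ContinuousOn.intervalIntegrable
      apply hfεcont.mono
      rw [Set.uIcc_of_le h2]
      exact Set.Icc_subset_Icc h1 h3
    have hperfε : ∀ y, fε (y + 1) = fε y := by
      intro y
      simp only [hfεdef]
      rw [hφper y]
      congr 2
      rw [← (Equiv.subRight Lz).tsum_eq (fun k : ℤ => ε⁻¹ * ρ ((y - F y + (k:ℝ))/ε))]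
      apply tsum_congr
      intro k
      have harg : y + 1 - F (y+1) + (k:ℝ) = y - F y + (((Equiv.subRight Lz) k : ℤ) : ℝ) := by
        rw [hFadd]
        simp only [Equiv.subRight_apply]
        push_cast [hLz, hLrdef]
        ring
      rw [harg]
    calc (∫ y in Set.Ioc (0 : ℝ) 1,
          ((∑' k : ℤ, ε⁻¹ * ρ ((y - F y + (k : ℝ)) / ε) : ℝ) : ℂ) *
            Complex.exp (Complex.I * (ξ : ℂ) * (E.birkhoff τ n y : ℂ)))
        = ∫ y in (0:ℝ)..1, fε y := (intervalIntegral.integral_of_le one_pos.le).symm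
      _ = ∫ y in a..(a+1), fε y := by
          have e1 : (∫ y in (0:ℝ)..1, fε y)
              = (∫ y in (0:ℝ)..a, fε y) + ∫ y in a..1, fε y :=
            (intervalIntegral.integral_add_adjacent_intervals
              (hii 0 a (by norm_num) ha0.le (by linarith))
              (hii a 1 (by linarith) ha1.le (by norm_num))).symm
          have e2 : (∫ y in (1:ℝ)..(a+1), fε y) = ∫ y in (0:ℝ)..a, fε y := by
            have e2' : (∫ y in (0:ℝ)..a, fε (y + 1)) = ∫ y in (0+1:ℝ)..(a+1), fε y :=
              intervalIntegral.integral_comp_add_right fε 1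
            simp only [hperfε] at e2'
            rw [e2']
            norm_num
          have e3 : (∫ y in a..(a+1), fε y)
              = (∫ y in a..1, fε y) + ∫ y in (1:ℝ)..(a+1), fε y :=
            (intervalIntegral.integral_add_adjacent_intervals
              (hii a 1 (by linarith) ha1.le (by norm_num))
              (hii 1 (a+1) (by norm_num) (by linarith) (by linarith))).symm
          rw [e1, e3, e2]
          ring
      _ = ∫ y in a..(a+1), ∑ k ∈ K, (ε⁻¹ * ρ (((k:ℝ) - g y)/ε)) • φ y := by
          apply intervalIntegral.integral_congr
          intro y hy
          rw [Set.uIcc_of_le (by linarith : a ≤ a + 1)] at hy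
          have hy2 : y ∈ Set.Icc (-2:ℝ) 2 :=
            ⟨by linarith [hy.1], by linarith [hy.2]⟩
          rw [hfin y hy2]
          have hargs : ∀ k : ℤ, (y - F y + (k:ℝ))/ε = ((k:ℝ) - g y)/ε := by
            intro k; simp only [hgdef]; ring_nf
          simp only [hargs]
          rw [← Complex.real_smul, Finset.sum_smul]
      _ = ∑ k ∈ K, ∫ y in a..(a+1), (ε⁻¹ * ρ (((k:ℝ) - g y)/ε)) • φ y := by
          apply intervalIntegral.integral_finset_sum
          intro k _
          apply Continuous.intervalIntegrable
          exact (continuous_const.mul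
            (hρ.continuous.comp ((continuous_const.sub hgc).div_const ε))).smul hφc
      _ = ∑ k ∈ K, ∫ u in (g a)..(g (a+1)), (ε⁻¹ * ρ (((k:ℝ) - u)/ε)) • ψ u := by
          apply Finset.sum_congr rfl
          intro k _
          have hsub := intervalIntegral.integral_comp_smul_deriv (a := a) (b := a+1)
            (f := g) (f' := fun x => deriv F x - 1)
            (g := fun u => (ε⁻¹ * ρ (((k:ℝ) - u)/ε)) • ψ u)
            (fun x _ => hgderiv x) ((hF'cont.sub continuous_const).continuousOn)
            ((continuous_const.mul
              (hρ.continuous.comp ((continuous_const.sub continuous_id).div_const ε))).smul hψc)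
          rw [← hsub]
          apply intervalIntegral.integral_congr
          intro y _
          have hdy : ((deriv F y : ℝ) : ℂ) - 1 ≠ 0 := by
            rw [show ((deriv F y : ℝ):ℂ) - 1 = ((deriv F y - 1 : ℝ):ℂ) by push_cast; ring]
            exact hdne y
          have hεC : (ε:ℂ) ≠ 0 := by exact_mod_cast hε0.ne'
          have hdd : (-(ε:ℂ) + (ε:ℂ) * ((deriv F y : ℝ):ℂ)) ≠ 0 := by
            have he : (-(ε:ℂ) + (ε:ℂ) * ((deriv F y : ℝ):ℂ)) = (ε:ℂ) * (((deriv F y : ℝ):ℂ) - 1) := by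
              ring
            rw [he]
            exact mul_ne_zero hεC hdy
          simp only [Function.comp_apply, hψdef, hginv_g]
          rw [smul_smul, Complex.real_smul, Complex.real_smul]
          push_cast
          field_simp [hεC, hdd]
  -- conclude
  rw [htarget]
  refine Tendsto.congr' (keymain.mono fun ε h => h.symm) ?_
  have hsum_eq : (∑ k ∈ K', ψ (k:ℝ))
      = ∑ k ∈ K, (if k ∈ K' then ψ (k:ℝ) else 0) := by
    rw [Finset.sum_ite_mem, Finset.inter_eq_right.2 hK'K]
  rw [hsum_eq]
  apply tendsto_finset_sum
  intro k _
  by_cases hkK' : k ∈ K'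
  · rw [if_pos hkK']
    obtain ⟨h1, h2⟩ := (hK'mem k).1 hkK'
    exact Stmt12.moll_int hρ.continuous hψc hR hsupp hρint h1 h2
  · rw [if_neg hkK']
    have hk' : (k:ℝ) < g a ∨ g (a+1) < (k:ℝ) := by
      rcases not_and_or.1 (fun hh => hkK' ((hK'mem k).2 hh)) with h | h
      · left
        push_neg at h
        exact lt_of_le_of_ne h (haB k).symm
      · right
        push_neg at h
        exact lt_of_le_of_ne h (hga1B k)
    exact Stmt12.moll_zero hρ.continuous hψc hR hsupp hgaa1.le hk'


end
end

section
/- Let J := log E'. Assume that for every β > 0 the topological pressure Pr(−βJ) := lim_{n→∞} (1/n)·log( Σ_{x : E^n(x)=x} e^{−β J^n_x} ) exists. Then the function F : (0, ∞) → ℝ, F(β) := (1/β)·Pr(−βJ), is strictly decreasing. -/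
open MeasureTheory ProbabilityTheory Real Filter Topology

noncomputable section

section S17aux
open scoped ContDiff
namespace S17
variable (E : ExpandingCircleMap)

lemma per_int {f : ℝ → ℝ} (h : Function.Periodic f 1) (x : ℝ) (k : ℤ) : f (x + k) = f x := by
  simpa using (h.int_mul k) x

lemma lift_diff : Differentiable ℝ E.lift := E.smooth.differentiable (by simp)
lemma lift_cont : Continuous E.lift := (lift_diff E).continuous
lemma lift_smooth_infty : ContDiff ℝ ∞ E.lift := E.smooth.of_le (by simp)
lemma deriv_contDiff : ContDiff ℝ ∞ (deriv E.lift) :=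
  (contDiff_infty_iff_deriv.mp (lift_smooth_infty E)).2
lemma deriv_cont : Continuous (deriv E.lift) := (deriv_contDiff E).continuous
lemma deriv_pos : ∀ x, 0 < deriv E.lift x := fun x => lt_trans one_pos (E.expanding x)

lemma lift_strictMono : StrictMono E.lift := strictMono_of_deriv_pos (deriv_pos E)

lemma deriv_periodic : Function.Periodic (deriv E.lift) 1 := by
  intro x
  have h2 : (fun y => E.lift (y + 1)) = fun y => E.lift y + E.deg := funext E.lift_add_one
  have h1 : deriv (fun y => E.lift (y + 1)) x = deriv E.lift (x + 1) := by
    simpa using deriv_comp_add_const E.lift 1 x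
  rw [h2] at h1
  simpa [deriv_add_const] using h1.symm

lemma lift_sub_linear_periodic : Function.Periodic (fun x => E.lift x - E.deg * x) 1 := by
  intro x; simp only [E.lift_add_one]; ring

lemma lift_add_int (k : ℤ) (x : ℝ) : E.lift (x + k) = E.lift x + k * E.deg := by
  have := per_int (lift_sub_linear_periodic E) x k
  linarith [this]

lemma iter_add_one (n : ℕ) (x : ℝ) :
    E.lift^[n] (x + 1) = E.lift^[n] x + (E.deg : ℝ) ^ n := by
  induction n generalizing x with
  | zero => simp
  | succ n ih =>
      rw [Function.iterate_succ_apply', Function.iterate_succ_apply', ih]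
      have : E.lift^[n] x + (E.deg:ℝ) ^ n = E.lift^[n] x + (((E.deg:ℤ) ^ n : ℤ) : ℝ) := by
        push_cast; ring
      rw [this, lift_add_int]
      push_cast; ring

lemma iter_sub_linear_periodic (n : ℕ) :
    Function.Periodic (fun x => E.lift^[n] x - (E.deg : ℝ) ^ n * x) 1 := by
  intro x; simp only [iter_add_one E n x]; ring

lemma iter_add_int (n : ℕ) (k : ℤ) (x : ℝ) :
    E.lift^[n] (x + k) = E.lift^[n] x + k * (E.deg : ℝ) ^ n := by
  have := per_int (iter_sub_linear_periodic E n) x k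
  linarith [this]


-- choose a uniform expansion constant
lemma exists_expansion : ∃ m : ℝ, 1 < m ∧ ∀ x, m ≤ deriv E.lift x := by
  obtain ⟨x₀, _, hx₀⟩ := (isCompact_Icc (a := (0:ℝ)) (b := 1)).exists_isMinOn
    (Set.nonempty_Icc.mpr zero_le_one) (deriv_cont E).continuousOn
  refine ⟨deriv E.lift x₀, E.expanding x₀, fun y => ?_⟩
  have h1 : deriv E.lift y = deriv E.lift (Int.fract y) := by
    have : Int.fract y = y + (-⌊y⌋ : ℤ) := by rw [Int.fract]; push_cast; ring
    rw [this, per_int (deriv_periodic E)]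
  rw [h1]
  exact hx₀ ⟨Int.fract_nonneg y, (Int.fract_lt_one y).le⟩

section Expansion
variable {E} {m : ℝ} (hm1 : 1 < m) (hm : ∀ x, m ≤ deriv E.lift x)

include hm1 hm in
lemma lift_expand_le {a b : ℝ} (hab : a ≤ b) : m * (b - a) ≤ E.lift b - E.lift a := by
  rcases eq_or_lt_of_le hab with rfl | h
  · simp
  · obtain ⟨c, _, hc⟩ := exists_hasDerivAt_eq_slope E.lift (deriv E.lift) h
      (lift_cont E).continuousOn (fun x _ => ((lift_diff E) x).hasDerivAt)
    have hslope : (E.lift b - E.lift a) / (b - a) = deriv E.lift c := hc.symm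
    have := hm c
    rw [← hslope] at this
    have hba : 0 < b - a := by linarith
    calc m * (b - a) ≤ ((E.lift b - E.lift a) / (b - a)) * (b - a) := by
          exact mul_le_mul_of_nonneg_right this hba.le
    _ = E.lift b - E.lift a := by field_simp

include hm1 hm in
lemma lift_expand_abs (a b : ℝ) : m * |a - b| ≤ |E.lift a - E.lift b| := by
  rcases le_total a b with h | h
  · rw [abs_sub_comm, abs_of_nonneg (by linarith), abs_sub_comm (E.lift a),
      abs_of_nonneg (by linarith [(lift_strictMono E).monotone h])]
    exact lift_expand_le hm1 hm h
  · rw [abs_of_nonneg (by linarith), abs_of_nonneg (by linarith [(lift_strictMono E).monotone h])]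
    exact lift_expand_le hm1 hm h

include hm1 hm in
lemma iter_expand_le (n : ℕ) {a b : ℝ} (hab : a ≤ b) :
    m ^ n * (b - a) ≤ E.lift^[n] b - E.lift^[n] a := by
  induction n with
  | zero => simpa using hab
  | succ n ih =>
      rw [Function.iterate_succ_apply', Function.iterate_succ_apply']
      have h1 : E.lift^[n] a ≤ E.lift^[n] b := ((lift_strictMono E).iterate n).monotone hab
      calc m ^ (n+1) * (b - a) = m * (m ^ n * (b - a)) := by ring
      _ ≤ m * (E.lift^[n] b - E.lift^[n] a) :=
          mul_le_mul_of_nonneg_left ih (by linarith)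
      _ ≤ _ := lift_expand_le hm1 hm h1

include hm1 hm in
lemma G_strictMono (n : ℕ) (hn : 1 ≤ n) :
    StrictMono (fun x => E.lift^[n] x - x) := by
  intro a b hab
  have := iter_expand_le hm1 hm n hab.le
  have hmn : 1 ≤ m ^ n := one_le_pow₀ hm1.le
  have hmn' : 1 < m ^ n := by
    calc (1:ℝ) = 1 ^ n := (one_pow n).symm
    _ < m ^ n := by
        apply pow_lt_pow_left₀ hm1 zero_le_one
        omega
  simp only
  nlinarith [this, hab]

end Expansion

lemma G_add_int (n : ℕ) (k : ℤ) (x : ℝ) :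
    E.lift^[n] (x + k) - (x + k) = (E.lift^[n] x - x) + k * ((E.deg:ℝ) ^ n - 1) := by
  rw [iter_add_int]; ring

lemma G_cont (n : ℕ) : Continuous (fun x => E.lift^[n] x - x) :=
  ((lift_cont E).iterate n).sub continuous_id

lemma G_surj (n : ℕ) (hn : 1 ≤ n) (t : ℝ) : ∃ x, E.lift^[n] x - x = t := by
  set G := fun x => E.lift^[n] x - x with hG
  have hdeg : (2:ℝ) ≤ (E.deg : ℝ) := by exact_mod_cast E.two_le_deg
  have hpow : (2:ℝ) ≤ (E.deg:ℝ) ^ n := by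
    calc (2:ℝ) = 2 ^ 1 := by norm_num
    _ ≤ 2 ^ n := by apply pow_le_pow_right₀ one_le_two hn
    _ ≤ (E.deg:ℝ) ^ n := by apply pow_le_pow_left₀ zero_le_two hdeg
  have hper : ∀ k : ℤ, G ((k:ℝ)) = G 0 + k * ((E.deg:ℝ)^n - 1) := by
    intro k
    have := G_add_int E n k 0
    simp only [hG]
    simp only [zero_add] at this
    rw [this]
  obtain ⟨k₁, hk₁⟩ : ∃ k₁ : ℤ, (k₁:ℝ) ≤ (t - G 0) / ((E.deg:ℝ)^n - 1) := exists_int_le _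
  obtain ⟨k₂, hk₂⟩ : ∃ k₂ : ℤ, (t - G 0) / ((E.deg:ℝ)^n - 1) ≤ (k₂:ℝ) := exists_int_ge _
  have hpos : (0:ℝ) < (E.deg:ℝ)^n - 1 := by linarith
  have h₁ : G k₁ ≤ t := by
    rw [hper]
    have : (k₁:ℝ) * ((E.deg:ℝ)^n - 1) ≤ t - G 0 := by
      rw [← le_div_iff₀ hpos]; exact hk₁
    linarith
  have h₂ : t ≤ G k₂ := by
    rw [hper]
    have : t - G 0 ≤ (k₂:ℝ) * ((E.deg:ℝ)^n - 1) := by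
      rw [← div_le_iff₀ hpos]; exact hk₂
    linarith
  have hk12 : (k₁:ℝ) ≤ (k₂:ℝ) := le_trans hk₁ hk₂
  have := intermediate_value_Icc hk12 (G_cont E n).continuousOn
  obtain ⟨x, _, hx⟩ := this ⟨h₁, h₂⟩
  exact ⟨x, hx⟩

lemma one_le_infty : (1 : WithTop ℕ∞) ≤ ∞ := by
  exact_mod_cast (le_top : (1:ℕ∞) ≤ ⊤)

lemma J_periodic : Function.Periodic E.J 1 := by
  intro x
  unfold ExpandingCircleMap.J
  rw [deriv_periodic E x]

lemma periodic_deriv {f : ℝ → ℝ} (h : Function.Periodic f 1) :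
    Function.Periodic (deriv f) 1 := by
  intro x
  have h1 : deriv (fun y => f (y + 1)) x = deriv f (x + 1) := by
    simpa using deriv_comp_add_const f 1 x
  have h2 : (fun y => f (y + 1)) = f := funext h
  rw [h2] at h1
  exact h1.symm

lemma exists_lipschitz : ∃ K : ℝ, 0 ≤ K ∧ ∀ a b, |E.J a - E.J b| ≤ K * |a - b| := by
  have hdd : Differentiable ℝ (deriv E.lift) :=
    (deriv_contDiff E).differentiable (by simp)
  have hJd : ∀ x, HasDerivAt E.J (deriv (deriv E.lift) x / deriv E.lift x) x := by
    intro x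
    have h1 : HasDerivAt (deriv E.lift) (deriv (deriv E.lift) x) x := (hdd x).hasDerivAt
    exact h1.log (ne_of_gt (deriv_pos E x))
  have hcont : Continuous fun x => |deriv (deriv E.lift) x / deriv E.lift x| := by
    apply Continuous.abs
    exact ((contDiff_infty_iff_deriv.mp (deriv_contDiff E)).2.continuous).div
      (deriv_cont E) (fun x => ne_of_gt (deriv_pos E x))
  obtain ⟨x₀, _, hx₀⟩ := (isCompact_Icc (a := (0:ℝ)) (b := 1)).exists_isMaxOn
    (Set.nonempty_Icc.mpr zero_le_one) hcont.continuousOn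
  set K := |deriv (deriv E.lift) x₀ / deriv E.lift x₀| with hK
  have hK0 : 0 ≤ K := abs_nonneg _
  have hbound : ∀ x, |deriv (deriv E.lift) x / deriv E.lift x| ≤ K := by
    intro x
    have h1 : Int.fract x = x + (-⌊x⌋ : ℤ) := by rw [Int.fract]; push_cast; ring
    have e1 : deriv E.lift (Int.fract x) = deriv E.lift x := by
      rw [h1, per_int (deriv_periodic E)]
    have e2 : deriv (deriv E.lift) (Int.fract x) = deriv (deriv E.lift) x := by
      rw [h1, per_int (periodic_deriv (deriv_periodic E))]
    have h2 : |deriv (deriv E.lift) (Int.fract x) / deriv E.lift (Int.fract x)| ≤ K :=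
      hx₀ ⟨Int.fract_nonneg x, (Int.fract_lt_one x).le⟩
    rwa [e1, e2] at h2
  refine ⟨K, hK0, fun a b => ?_⟩
  have hlip : LipschitzWith (Real.toNNReal K) E.J := by
    apply lipschitzWith_of_nnnorm_deriv_le (fun x => (hJd x).differentiableAt)
    intro x
    rw [← NNReal.coe_le_coe, coe_nnnorm, Real.coe_toNNReal _ hK0, (hJd x).deriv,
      Real.norm_eq_abs]
    exact hbound x
  have := hlip.dist_le_mul a b
  rwa [Real.dist_eq, Real.dist_eq, Real.coe_toNNReal _ hK0] at this

lemma birkhoff_add_int (n : ℕ) (k : ℤ) (x : ℝ) :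
    E.birkhoff E.J n (x + k) = E.birkhoff E.J n x := by
  unfold ExpandingCircleMap.birkhoff
  apply Finset.sum_congr rfl
  intro j _
  have h1 : E.lift^[j] (x + k) = E.lift^[j] x + ((k * (E.deg:ℤ)^j : ℤ) : ℝ) := by
    rw [iter_add_int]; push_cast; ring
  rw [h1, per_int (J_periodic E)]

section FixFacts
variable {E} {m : ℝ} (hm1 : 1 < m) (hm : ∀ x, m ≤ deriv E.lift x)

include hm1 hm in
lemma fix_finite (n : ℕ) (hn : 1 ≤ n) : (E.Fix n).Finite := by
  set G := fun x => E.lift^[n] x - x with hG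
  have hGmono := G_strictMono hm1 hm n hn
  have himg : (G '' E.Fix n).Finite := by
    apply Set.Finite.subset ((Set.finite_Icc (⌈G 0⌉) (⌊G 1⌋)).image (fun k : ℤ => (k:ℝ)))
    rintro - ⟨x, ⟨⟨hx0, hx1⟩, k, hk⟩, rfl⟩
    have hGx : G x = k := by simp [hG, hk]
    refine ⟨k, ⟨?_, ?_⟩, hGx.symm⟩
    · rw [Int.ceil_le, ← hGx]; exact hGmono.monotone hx0
    · rw [Int.le_floor, ← hGx]; exact (hGmono hx1).le
  exact Set.Finite.of_finite_image himg hGmono.injective.injOn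

include hm1 hm in
lemma fix_nonempty (n : ℕ) (hn : 2 ≤ n) : (E.Fix n).Nonempty := by
  set G := fun x => E.lift^[n] x - x with hG
  have hGmono := G_strictMono hm1 hm n (by omega)
  obtain ⟨x, hx⟩ := G_surj E n (by omega) ((⌊G 0⌋ : ℝ) + 1)
  have hx' : G x = (⌊G 0⌋ : ℝ) + 1 := hx
  have hdeg : (2:ℝ) ≤ (E.deg : ℝ) := by exact_mod_cast E.two_le_deg
  have hpow : (4:ℝ) ≤ (E.deg:ℝ) ^ n := by
    calc (4:ℝ) = 2 ^ 2 := by norm_num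
    _ ≤ 2 ^ n := by apply pow_le_pow_right₀ one_le_two hn
    _ ≤ (E.deg:ℝ) ^ n := by apply pow_le_pow_left₀ zero_le_two hdeg
  have hG1 : G 1 = G 0 + ((E.deg:ℝ)^n - 1) := by
    have := G_add_int E n 1 0
    simp only [hG]
    simp only [zero_add, Int.cast_one, one_mul] at this ⊢
    rw [this]
  have h0x : G 0 < G x := by rw [hx']; exact Int.lt_floor_add_one (G 0)
  have hx1 : G x < G 1 := by
    rw [hx', hG1]
    have : (⌊G 0⌋ : ℝ) ≤ G 0 := Int.floor_le _
    linarith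
  refine ⟨x, ⟨⟨?_, ?_⟩, ⟨⌊G 0⌋ + 1, ?_⟩⟩⟩
  · exact le_of_lt ((hGmono.lt_iff_lt).mp h0x)
  · exact (hGmono.lt_iff_lt).mp hx1
  · have h2 : E.lift^[n] x - x = (⌊G 0⌋:ℝ) + 1 := hx'
    push_cast
    linarith

end FixFacts

section Digits
variable {l : ℕ} (hl : 2 ≤ l)

include hl in
lemma geom_sum_le (t : ℕ) : ∑ i ∈ Finset.range t, l ^ i ≤ l ^ t - 1 := by
  induction t with
  | zero => simp
  | succ t ih =>
      rw [Finset.sum_range_succ]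
      have h1 : 1 ≤ l ^ t := Nat.one_le_pow _ _ (by omega)
      have h2 : 2 * l ^ t ≤ l ^ (t+1) := by
        rw [pow_succ]
        calc 2 * l ^ t = l ^ t * 2 := by ring
        _ ≤ l ^ t * l := by exact Nat.mul_le_mul_left _ hl
      omega

include hl in
lemma digit_unique : ∀ (t : ℕ) (A B : Finset ℕ), A ⊆ Finset.range t → B ⊆ Finset.range t →
    (∑ i ∈ A, l ^ i) = (∑ i ∈ B, l ^ i) → A = B := by
  intro t
  induction t with
  | zero =>
      intro A B hA hB _
      simp only [Finset.range_zero, Finset.subset_empty] at hA hB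
      rw [hA, hB]
  | succ t ih =>
      intro A B hA hB hsum
      have key : ∀ (C D : Finset ℕ), C ⊆ Finset.range (t+1) → D ⊆ Finset.range (t+1) →
          (∑ i ∈ C, l ^ i) = (∑ i ∈ D, l ^ i) → t ∈ C → t ∈ D := by
        intro C D hC hD hs htC
        by_contra htD
        have hD' : D ⊆ Finset.range t := by
          intro x hx
          have := hD hx
          simp only [Finset.mem_range] at this ⊢
          rcases Nat.lt_succ_iff_lt_or_eq.mp this with h | rfl
          · exact h
          · exact absurd hx htD
        have h1 : l ^ t ≤ ∑ i ∈ C, l ^ i := Finset.single_le_sum (fun i _ => Nat.zero_le _) htC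
        have h2 : ∑ i ∈ D, l ^ i ≤ l ^ t - 1 :=
          le_trans (Finset.sum_le_sum_of_subset hD') (geom_sum_le hl t)
        have h3 : 1 ≤ l ^ t := Nat.one_le_pow _ _ (by omega)
        omega
      by_cases ht : t ∈ A
      · have htB : t ∈ B := key A B hA hB hsum ht
        have hsum' : (∑ i ∈ A.erase t, l ^ i) = ∑ i ∈ B.erase t, l ^ i := by
          have e1 : l ^ t + ∑ i ∈ A.erase t, l ^ i = ∑ i ∈ A, l ^ i :=
            Finset.add_sum_erase A (fun i => l ^ i) ht
          have e2 : l ^ t + ∑ i ∈ B.erase t, l ^ i = ∑ i ∈ B, l ^ i :=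
            Finset.add_sum_erase B (fun i => l ^ i) htB
          omega
        have := ih (A.erase t) (B.erase t)
          (fun x hx => by
            have h1 := hA (Finset.mem_of_mem_erase hx)
            have h2 := Finset.ne_of_mem_erase hx
            simp only [Finset.mem_range] at h1 ⊢; omega)
          (fun x hx => by
            have h1 := hB (Finset.mem_of_mem_erase hx)
            have h2 := Finset.ne_of_mem_erase hx
            simp only [Finset.mem_range] at h1 ⊢; omega)
          hsum'
        have hA2 := Finset.insert_erase ht
        have hB2 := Finset.insert_erase htB
        rw [← hA2, ← hB2, this]
      · have htB : t ∉ B := fun htB => ht (key B A hB hA hsum.symm htB)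
        exact ih A B
          (fun x hx => by
            have h1 := hA hx
            simp only [Finset.mem_range] at h1 ⊢
            rcases Nat.lt_succ_iff_lt_or_eq.mp h1 with h | rfl
            · exact h
            · exact absurd hx ht)
          (fun x hx => by
            have h1 := hB hx
            simp only [Finset.mem_range] at h1 ⊢
            rcases Nat.lt_succ_iff_lt_or_eq.mp h1 with h | rfl
            · exact h
            · exact absurd hx htB)
          hsum

end Digits

section Core
variable {E} {m K : ℝ} (hm1 : 1 < m) (hm : ∀ x, m ≤ deriv E.lift x)
  (hK0 : 0 ≤ K) (hK : ∀ a b, |E.J a - E.J b| ≤ K * |a - b|)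

include hm1 hm hK0 hK in
lemma flip_family (N : ℕ) (hN : 2 ≤ N) {z : ℝ} (hz : z ∈ E.Fix N) :
    ∃ Ψ : Finset ℕ → ℝ,
      (∀ S ∈ (Finset.Icc 1 (N-1)).powerset, Ψ S ∈ E.Fix N ∧
        E.birkhoff E.J N (Ψ S) ≤ E.birkhoff E.J N z + (K/(m-1)) * S.card) ∧
      Set.InjOn Ψ ((Finset.Icc 1 (N-1)).powerset : Finset (Finset ℕ)) := by
  obtain ⟨⟨hz0, hz1⟩, k, hk⟩ := hz
  set T : Finset ℕ := Finset.Icc 1 (N-1) with hT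
  set l : ℕ := E.deg with hl
  have hl2 : 2 ≤ l := E.two_le_deg
  -- index of a flipped word
  set kS : Finset ℕ → ℤ := fun S => k + ∑ j ∈ S, (l:ℤ) ^ (N-1-j) with hkS
  have hsurj : ∀ S : Finset ℕ, ∃ x : ℝ, E.lift^[N] x - x = ((kS S : ℤ):ℝ) :=
    fun S => G_surj E N (by omega) _
  set zs : Finset ℕ → ℝ := fun S => Classical.choose (hsurj S) with hzs
  have hzspec : ∀ S, E.lift^[N] (zs S) = zs S + ((kS S : ℤ):ℝ) := by
    intro S
    have := Classical.choose_spec (hsurj S)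
    linarith [this]
  -- main estimate for S ⊆ T
  have main : ∀ S ∈ T.powerset,
      |E.birkhoff E.J N (zs S) - E.birkhoff E.J N z| ≤ (K/(m-1)) * S.card := by
    intro S hS
    rw [Finset.mem_powerset] at hS
    have hSrange : ∀ j ∈ S, 1 ≤ j ∧ j ≤ N - 1 := by
      intro j hj
      have := hS hj
      rw [hT, Finset.mem_Icc] at this
      exact this
    -- integer corrections
    set c : ℕ → ℤ := fun i => ∑ j ∈ S.filter (· < i), (l:ℤ) ^ (i-1-j) with hc
    set u : ℕ → ℝ := fun i => E.lift^[i] (zs S) - (c i : ℝ) with hu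
    set w : ℕ → ℝ := fun i => E.lift^[i] z with hw
    set ε : ℕ → ℝ := fun i => if i ∈ S then (1:ℝ) else 0 with hε
    have hc0 : c 0 = 0 := by simp [hc]
    have hcsucc : ∀ i, c (i+1) = l * c i + (if i ∈ S then 1 else 0) := by
      intro i
      have hsplit : S.filter (· < i+1) =
          if i ∈ S then insert i (S.filter (· < i)) else S.filter (· < i) := by
        split_ifs with hi
        · ext j
          simp only [Finset.mem_filter, Finset.mem_insert]
          constructor
          · rintro ⟨hjS, hji⟩
            rcases Nat.lt_succ_iff_lt_or_eq.mp hji with h | h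
            · exact Or.inr ⟨hjS, h⟩
            · exact Or.inl h
          · rintro (rfl | ⟨hjS, hji⟩)
            · exact ⟨hi, Nat.lt_succ_self _⟩
            · exact ⟨hjS, by omega⟩
        · ext j
          simp only [Finset.mem_filter]
          constructor
          · rintro ⟨hjS, hji⟩
            refine ⟨hjS, ?_⟩
            rcases Nat.lt_succ_iff_lt_or_eq.mp hji with h | rfl
            · exact h
            · exact absurd hjS hi
          · rintro ⟨hjS, hji⟩
            exact ⟨hjS, by omega⟩
      have hterm : ∀ j ∈ S.filter (· < i), (l:ℤ) ^ (i+1-1-j) = l * (l:ℤ) ^ (i-1-j) := by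
        intro j hj
        rw [Finset.mem_filter] at hj
        have hj1 : 1 ≤ j := (hSrange j hj.1).1
        have : i + 1 - 1 - j = (i - 1 - j) + 1 := by omega
        rw [this, pow_succ]
        ring
      simp only [hc, hsplit]
      split_ifs with hi
      · rw [Finset.sum_insert (by simp)]
        rw [Finset.sum_congr rfl hterm, Finset.mul_sum]
        have : i + 1 - 1 - i = 0 := by omega
        rw [this]
        ring
      · rw [Finset.sum_congr rfl hterm, Finset.mul_sum]
        ring
    have hcN : (c N : ℝ) = (kS S : ℝ) - k := by
      have hfilter : S.filter (· < N) = S := by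
        apply Finset.filter_true_of_mem
        intro j hj
        have := (hSrange j hj).2
        omega
      simp only [hc, hkS, hfilter]
      push_cast
      ring
    -- the cyclic boundary identity
    have hbd : u N - w N = u 0 - w 0 := by
      simp only [hu, hw, hc0, Function.iterate_zero_apply]
      rw [hzspec S, hk, hcN]
      push_cast
      ring
    -- one-step recursion
    have hrec : ∀ i, m * |u i - w i| ≤ |u (i+1) - w (i+1)| + ε i := by
      intro i
      have hlift_u : E.lift (u i) = E.lift^[i+1] (zs S) - (c i : ℝ) * l := by
        have h1 : u i = E.lift^[i] (zs S) + ((-(c i) : ℤ) : ℝ) := by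
          simp only [hu]; push_cast; ring
        rw [h1, lift_add_int, Function.iterate_succ_apply']
        push_cast [hl]
        ring
      have hlift_w : E.lift (w i) = E.lift^[i+1] z := by
        simp only [hw, Function.iterate_succ_apply']
      have hdiff : E.lift (u i) - E.lift (w i) = (u (i+1) - w (i+1)) + ε i := by
        rw [hlift_u, hlift_w]
        simp only [hu, hw, hε]
        rw [hcsucc i]
        push_cast
        split_ifs <;> ring
      have := lift_expand_abs hm1 hm (u i) (w i)
      rw [hdiff] at this
      calc m * |u i - w i| ≤ |(u (i+1) - w (i+1)) + ε i| := this
      _ ≤ |u (i+1) - w (i+1)| + |ε i| := abs_add_le _ _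
      _ = |u (i+1) - w (i+1)| + ε i := by
          simp only [hε]; split_ifs <;> simp
    -- sum the recursion
    have hεsum : ∑ i ∈ Finset.range N, ε i = S.card := by
      simp only [hε]
      rw [Finset.sum_ite_mem]
      have : Finset.range N ∩ S = S := by
        apply Finset.inter_eq_right.mpr
        intro j hj
        have := (hSrange j hj).2
        rw [Finset.mem_range]
        omega
      rw [this]
      simp
    have hsum : ∑ i ∈ Finset.range N, |u i - w i| ≤ S.card / (m-1) := by
      have h1 : m * ∑ i ∈ Finset.range N, |u i - w i| ≤
          (∑ i ∈ Finset.range N, |u (i+1) - w (i+1)|) + S.card := by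
        rw [Finset.mul_sum, ← hεsum, ← Finset.sum_add_distrib]
        exact Finset.sum_le_sum (fun i _ => hrec i)
      have h2 : ∑ i ∈ Finset.range N, |u (i+1) - w (i+1)| =
          ∑ i ∈ Finset.range N, |u i - w i| := by
        have e1 : ∑ i ∈ Finset.range (N+1), |u i - w i| =
            (∑ i ∈ Finset.range N, |u (i+1) - w (i+1)|) + |u 0 - w 0| :=
          Finset.sum_range_succ' _ N
        have e2 : ∑ i ∈ Finset.range (N+1), |u i - w i| =
            (∑ i ∈ Finset.range N, |u i - w i|) + |u N - w N| :=
          Finset.sum_range_succ _ N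
        rw [hbd] at e2
        linarith
      rw [h2] at h1
      have hm0' : 0 < m - 1 := by linarith
      rw [le_div_iff₀ hm0']
      nlinarith [h1]
    -- from orbit distance to Birkhoff sums
    have hbk_zs : E.birkhoff E.J N (zs S) = ∑ i ∈ Finset.range N, E.J (u i) := by
      unfold ExpandingCircleMap.birkhoff
      apply Finset.sum_congr rfl
      intro i _
      have : E.lift^[i] (zs S) = u i + ((c i : ℤ) : ℝ) := by simp [hu]
      rw [this, per_int (J_periodic E)]
    have hbk_z : E.birkhoff E.J N z = ∑ i ∈ Finset.range N, E.J (w i) := rfl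
    rw [hbk_zs, hbk_z, ← Finset.sum_sub_distrib]
    calc |∑ i ∈ Finset.range N, (E.J (u i) - E.J (w i))|
        ≤ ∑ i ∈ Finset.range N, |E.J (u i) - E.J (w i)| := Finset.abs_sum_le_sum_abs _ _
    _ ≤ ∑ i ∈ Finset.range N, K * |u i - w i| := Finset.sum_le_sum (fun i _ => hK _ _)
    _ = K * ∑ i ∈ Finset.range N, |u i - w i| := by rw [Finset.mul_sum]
    _ ≤ K * (S.card / (m-1)) := by
        apply mul_le_mul_of_nonneg_left hsum hK0
    _ = (K/(m-1)) * S.card := by ring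
  -- now define Ψ and check everything
  refine ⟨fun S => Int.fract (zs S), ?_, ?_⟩
  · intro S hS
    constructor
    · refine ⟨⟨Int.fract_nonneg _, Int.fract_lt_one _⟩, ?_⟩
      refine ⟨kS S - ⌊zs S⌋ * ((l:ℤ)^N - 1), ?_⟩
      show E.lift^[N] (Int.fract (zs S)) = Int.fract (zs S) + ((kS S - ⌊zs S⌋ * ((l:ℤ)^N - 1) : ℤ) : ℝ)
      have h1 : Int.fract (zs S) = zs S + ((-⌊zs S⌋ : ℤ) : ℝ) := by
        rw [Int.fract]; push_cast; ring
      rw [h1, iter_add_int, hzspec S]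
      push_cast [hl]
      ring
    · show E.birkhoff E.J N (Int.fract (zs S)) ≤ E.birkhoff E.J N z + (K/(m-1)) * S.card
      have h1 : Int.fract (zs S) = zs S + ((-⌊zs S⌋ : ℤ) : ℝ) := by
        rw [Int.fract]; push_cast; ring
      rw [h1, birkhoff_add_int]
      have := main S hS
      have h2 := abs_le.mp this
      linarith [h2.1, h2.2]
  · -- injectivity
    intro S hS' S' hS'' heq
    simp only [Finset.coe_powerset, Set.mem_preimage, Set.mem_powerset_iff,
      Finset.coe_subset] at hS' hS''
    by_contra hne
    -- fract equal means zs differ by an integer D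
    have hD : zs S - zs S' = ((⌊zs S⌋ - ⌊zs S'⌋ : ℤ) : ℝ) := by
      have e1 : Int.fract (zs S) = Int.fract (zs S') := heq
      rw [Int.fract, Int.fract] at e1
      push_cast
      linarith
    set D : ℤ := ⌊zs S⌋ - ⌊zs S'⌋ with hDdef
    -- apply G to the relation
    have hGrel : ((kS S : ℤ):ℝ) - ((kS S' : ℤ):ℝ) = (D:ℝ) * ((l:ℝ)^N - 1) := by
      have e1 : E.lift^[N] (zs S) - zs S = ((kS S : ℤ):ℝ) := by
        rw [hzspec S]; ring
      have e2 : E.lift^[N] (zs S') - zs S' = ((kS S' : ℤ):ℝ) := by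
        rw [hzspec S']; ring
      have e3 : zs S = zs S' + (D:ℝ) := by rw [← hD]; ring
      have e4 : E.lift^[N] (zs S' + (D:ℝ)) = E.lift^[N] (zs S') + (D:ℝ) * (l:ℝ)^N := by
        exact_mod_cast iter_add_int E N D (zs S')
      rw [e3, e4] at e1
      have hr : (D:ℝ) * ((l:ℝ)^N - 1) = (D:ℝ)*(l:ℝ)^N - (D:ℝ) := by ring
      rw [hr]
      linarith [e1, e2]
    -- integer equation
    have hint : kS S - kS S' = D * ((l:ℤ)^N - 1) := by
      have := hGrel
      push_cast at this
      exact_mod_cast this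
    -- bound on the difference of indices
    have hbound : |kS S - kS S'| < (l:ℤ)^N - 1 := by
      have hsub : ∀ (W : Finset ℕ), W ⊆ T →
          (0:ℤ) ≤ ∑ j ∈ W, (l:ℤ) ^ (N-1-j) ∧
          ∑ j ∈ W, (l:ℤ) ^ (N-1-j) ≤ ∑ j ∈ T, (l:ℤ) ^ (N-1-j) := by
        intro W hW
        constructor
        · apply Finset.sum_nonneg
          intro j _
          positivity
        · apply Finset.sum_le_sum_of_subset_of_nonneg hW
          intro j _ _
          positivity
      have hTsum : ∑ j ∈ T, (l:ℤ) ^ (N-1-j) ≤ (l:ℤ)^(N-1) - 1 := by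
        have hmap : ∑ j ∈ T, (l:ℤ) ^ (N-1-j) = ∑ i ∈ Finset.range (N-1), (l:ℤ) ^ i := by
          apply Finset.sum_nbij' (fun j => N-1-j) (fun i => N-1-i)
          · intro j hj
            rw [hT, Finset.mem_Icc] at hj
            rw [Finset.mem_range]
            omega
          · intro i hi
            rw [Finset.mem_range] at hi
            rw [hT, Finset.mem_Icc]
            omega
          · intro j hj
            rw [hT, Finset.mem_Icc] at hj
            omega
          · intro i hi
            rw [Finset.mem_range] at hi
            omega
          · intro j _
            rfl
        rw [hmap]
        have := geom_sum_le hl2 (N-1)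
        have hcast : ((∑ i ∈ Finset.range (N-1), l ^ i : ℕ) : ℤ) =
            ∑ i ∈ Finset.range (N-1), (l:ℤ) ^ i := by push_cast; rfl
        have h1 : (1:ℕ) ≤ l ^ (N-1) := Nat.one_le_pow _ _ (by omega)
        have h2 : ((l ^ (N-1) - 1 : ℕ) : ℤ) = (l:ℤ)^(N-1) - 1 := by
          push_cast [h1]
          ring
        rw [← hcast, ← h2]
        exact_mod_cast this
      have hpowlt : (l:ℤ)^(N-1) - 1 < (l:ℤ)^N - 1 := by
        have : (l:ℤ)^(N-1) < (l:ℤ)^N := by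
          apply pow_lt_pow_right₀ (by exact_mod_cast hl2 : (1:ℤ) < l)
          omega
        linarith
      have h1 := hsub S hS'
      have h2 := hsub S' hS''
      have : |kS S - kS S'| ≤ ∑ j ∈ T, (l:ℤ) ^ (N-1-j) := by
        rw [abs_le]
        constructor
        · simp only [hkS]
          have := h1.1; have := h2.2
          omega
        · simp only [hkS]
          have := h1.2; have := h2.1
          omega
      calc |kS S - kS S'| ≤ ∑ j ∈ T, (l:ℤ) ^ (N-1-j) := this
      _ ≤ (l:ℤ)^(N-1) - 1 := hTsum
      _ < (l:ℤ)^N - 1 := hpowlt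
  -- conclude D = 0 then S = S'
    have hp1 : (1:ℤ) ≤ (l:ℤ)^N := one_le_pow₀ (by exact_mod_cast (by omega : 1 ≤ l))
    have hp : (0:ℤ) < (l:ℤ)^N - 1 := by
      have h2N : ((2:ℤ))^N ≤ (l:ℤ)^N := by
        apply pow_le_pow_left₀ (by norm_num) (by exact_mod_cast hl2)
      have h4 : (4:ℤ) ≤ (2:ℤ)^N := by
        calc (4:ℤ) = 2^2 := by norm_num
        _ ≤ 2^N := pow_le_pow_right₀ (by norm_num) hN
      linarith
    have hD0 : D = 0 := by
      rw [hint, abs_mul, abs_of_pos hp] at hbound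
      have hDlt : |D| < 1 := by nlinarith [abs_nonneg D]
      exact Int.abs_lt_one_iff.mp hDlt
    rw [hD0] at hint
    simp only [zero_mul] at hint
    have hkeq : kS S = kS S' := by omega
    -- digits are equal
    have hsum_eq : (∑ j ∈ S, l ^ (N-1-j) : ℕ) = ∑ j ∈ S', l ^ (N-1-j) := by
      have : (∑ j ∈ S, (l:ℤ) ^ (N-1-j)) = ∑ j ∈ S', (l:ℤ) ^ (N-1-j) := by
        simp only [hkS] at hkeq
        omega
      exact_mod_cast this
    -- move to images
    have himg : S.image (fun j => N-1-j) = S'.image (fun j => N-1-j) := by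
      have hinj : ∀ (W : Finset ℕ), W ⊆ T → Set.InjOn (fun j => N-1-j) W := by
        intro W hW a ha b hb hab
        have ha' := hW ha
        have hb' := hW hb
        rw [hT, Finset.mem_Icc] at ha' hb'
        simp only at hab
        omega
      have e1 : ∑ i ∈ S.image (fun j => N-1-j), l ^ i = ∑ j ∈ S, l ^ (N-1-j) :=
        Finset.sum_image (fun a ha b hb hab =>
          hinj S hS' (Finset.mem_coe.mpr ha) (Finset.mem_coe.mpr hb) hab)
      have e2 : ∑ i ∈ S'.image (fun j => N-1-j), l ^ i = ∑ j ∈ S', l ^ (N-1-j) :=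
        Finset.sum_image (fun a ha b hb hab =>
          hinj S' hS'' (Finset.mem_coe.mpr ha) (Finset.mem_coe.mpr hb) hab)
      apply digit_unique hl2 (N-1)
      · intro i hi
        obtain ⟨j, hj, rfl⟩ := Finset.mem_image.mp hi
        have := hS' hj
        rw [hT, Finset.mem_Icc] at this
        rw [Finset.mem_range]
        omega
      · intro i hi
        obtain ⟨j, hj, rfl⟩ := Finset.mem_image.mp hi
        have := hS'' hj
        rw [hT, Finset.mem_Icc] at this
        rw [Finset.mem_range]
        omega
      · rw [e1, e2, hsum_eq]
    -- recover S = S'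
    apply hne
    ext j
    constructor
    · intro hj
      have : N-1-j ∈ S'.image (fun j => N-1-j) := by
        rw [← himg]
        exact Finset.mem_image_of_mem _ hj
      obtain ⟨j', hj', hjj⟩ := Finset.mem_image.mp this
      have h1 := hS' hj
      have h2 := hS'' hj'
      rw [hT, Finset.mem_Icc] at h1 h2
      have : j' = j := by omega
      rwa [← this]
    · intro hj
      have : N-1-j ∈ S.image (fun j => N-1-j) := by
        rw [himg]
        exact Finset.mem_image_of_mem _ hj
      obtain ⟨j', hj', hjj⟩ := Finset.mem_image.mp this
      have h1 := hS'' hj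
      have h2 := hS' hj'
      rw [hT, Finset.mem_Icc] at h1 h2
      have : j' = j := by omega
      rwa [← this]


include hm1 hm hK0 hK in
lemma key_ineq (β1 β2 : ℝ) (hβ1 : 0 < β1) (h12 : β1 < β2) (N : ℕ) (hN : 2 ≤ N) :
    (β2 - β1) * (((N:ℝ) - 1) * Real.log (1 + Real.exp (-β1 * (K/(m-1))))) ≤
    β2 * Real.log (∑' x : E.Fix N, Real.exp (-β1 * E.birkhoff E.J N x)) -
    β1 * Real.log (∑' x : E.Fix N, Real.exp (-β2 * E.birkhoff E.J N x)) := by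
  have hfin := fix_finite hm1 hm N (by omega)
  haveI := hfin.fintype
  set F := hfin.toFinset with hF
  have hZdef : ∀ β : ℝ, (∑' x : E.Fix N, Real.exp (-β * E.birkhoff E.J N x)) =
      ∑ x ∈ F, Real.exp (-β * E.birkhoff E.J N x) := by
    intro β
    rw [tsum_fintype]
    exact Finset.sum_bij (fun x _ => x.1) (fun x _ => by simp [hF, hfin.mem_toFinset, x.2])
      (fun a _ b _ h => Subtype.ext h)
      (fun b hb => ⟨⟨b, by simpa [hF, hfin.mem_toFinset] using hb⟩, Finset.mem_univ _, rfl⟩)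
      (fun a _ => rfl)
  obtain ⟨z, hzmem, hzmin⟩ := Set.exists_min_image (E.Fix N) (E.birkhoff E.J N) hfin
    (fix_nonempty hm1 hm N hN)
  set μ := E.birkhoff E.J N z with hμ
  set B1 := K / (m-1) with hB1
  set Z1 := ∑ x ∈ F, Real.exp (-β1 * E.birkhoff E.J N x) with hZ1
  set Z2 := ∑ x ∈ F, Real.exp (-β2 * E.birkhoff E.J N x) with hZ2
  have hFne : F.Nonempty := ⟨z, hfin.mem_toFinset.mpr hzmem⟩
  have hZ1pos : 0 < Z1 := Finset.sum_pos (fun x _ => Real.exp_pos _) hFne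
  have hZ2pos : 0 < Z2 := Finset.sum_pos (fun x _ => Real.exp_pos _) hFne
  -- inequality (I)
  have hI : Z2 ≤ Real.exp (-(β2-β1)*μ) * Z1 := by
    rw [hZ2, hZ1, Finset.mul_sum]
    apply Finset.sum_le_sum
    intro x hx
    have hxm : x ∈ E.Fix N := hfin.mem_toFinset.mp hx
    have hbx : μ ≤ E.birkhoff E.J N x := hzmin x hxm
    rw [← Real.exp_add]
    apply Real.exp_le_exp.mpr
    nlinarith [hbx, h12]
  -- inequality (II)
  have hII : Real.exp (-β1*μ) * (1 + Real.exp (-β1*B1))^(N-1) ≤ Z1 := by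
    obtain ⟨Ψ, hΨ, hinj⟩ := flip_family hm1 hm hK0 hK N hN hzmem
    set T : Finset ℕ := Finset.Icc 1 (N-1) with hT
    have hinj' : ∀ S ∈ T.powerset, ∀ S' ∈ T.powerset, Ψ S = Ψ S' → S = S' := by
      intro S hS S' hS' h
      exact hinj (Finset.mem_coe.mpr hS) (Finset.mem_coe.mpr hS') h
    have himg : (T.powerset).image Ψ ⊆ F := by
      intro x hx
      obtain ⟨S, hS, rfl⟩ := Finset.mem_image.mp hx
      exact hfin.mem_toFinset.mpr (hΨ S hS).1
    have h1 : ∑ S ∈ T.powerset, Real.exp (-β1 * E.birkhoff E.J N (Ψ S)) ≤ Z1 := by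
      have e := Finset.sum_image (f := fun x => Real.exp (-β1 * E.birkhoff E.J N x))
        (g := Ψ) (s := T.powerset) hinj'
      rw [← e]
      exact Finset.sum_le_sum_of_subset_of_nonneg himg (fun _ _ _ => (Real.exp_pos _).le)
    have h2 : ∀ S ∈ T.powerset,
        Real.exp (-β1*μ) * (Real.exp (-β1*B1))^(S.card) ≤
        Real.exp (-β1 * E.birkhoff E.J N (Ψ S)) := by
      intro S hS
      have hb := (hΨ S hS).2
      rw [← Real.exp_nat_mul, ← Real.exp_add]
      apply Real.exp_le_exp.mpr
      nlinarith [hb, hβ1]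
    have h3 : ∑ S ∈ T.powerset, Real.exp (-β1*μ) * (Real.exp (-β1*B1))^(S.card) ≤
        ∑ S ∈ T.powerset, Real.exp (-β1 * E.birkhoff E.J N (Ψ S)) :=
      Finset.sum_le_sum h2
    have h4 : ∑ S ∈ T.powerset, Real.exp (-β1*μ) * (Real.exp (-β1*B1))^(S.card) =
        Real.exp (-β1*μ) * (1 + Real.exp (-β1*B1))^(N-1) := by
      rw [← Finset.mul_sum]
      congr 1
      have hpa : ∏ i ∈ T, (Real.exp (-β1*B1) + 1) =
          ∑ S ∈ T.powerset, (∏ i ∈ S, Real.exp (-β1*B1)) * ∏ i ∈ T \ S, (1:ℝ) :=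
        Finset.prod_add _ _ _
      have hTcard : T.card = N - 1 := by
        rw [hT, Nat.card_Icc]
        omega
      rw [Finset.prod_const, hTcard] at hpa
      calc ∑ S ∈ T.powerset, Real.exp (-β1*B1) ^ S.card
          = ∑ S ∈ T.powerset, (∏ _i ∈ S, Real.exp (-β1*B1)) * ∏ _i ∈ T \ S, (1:ℝ) :=
            Finset.sum_congr rfl (fun S _ => by
              rw [Finset.prod_const, Finset.prod_const, one_pow, mul_one])
      _ = (Real.exp (-β1*B1) + 1) ^ (N-1) := hpa.symm
      _ = (1 + Real.exp (-β1*B1)) ^ (N-1) := by rw [add_comm]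
    linarith [h1, h3, h4.symm.le]
  -- take logarithms
  have hlog2 : Real.log Z2 ≤ -(β2-β1)*μ + Real.log Z1 := by
    calc Real.log Z2 ≤ Real.log (Real.exp (-(β2-β1)*μ) * Z1) :=
          Real.log_le_log hZ2pos hI
    _ = -(β2-β1)*μ + Real.log Z1 := by
        rw [Real.log_mul (Real.exp_ne_zero _) (ne_of_gt hZ1pos), Real.log_exp]
  have hlog1 : -β1*μ + ((N:ℝ) - 1) * Real.log (1 + Real.exp (-β1*B1)) ≤ Real.log Z1 := by
    have hpos : (0:ℝ) < Real.exp (-β1*μ) * (1 + Real.exp (-β1*B1))^(N-1) := by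
      apply mul_pos (Real.exp_pos _)
      apply pow_pos
      linarith [Real.exp_pos (-β1*B1)]
    calc -β1*μ + ((N:ℝ) - 1) * Real.log (1 + Real.exp (-β1*B1))
        = Real.log (Real.exp (-β1*μ) * (1 + Real.exp (-β1*B1))^(N-1)) := by
          rw [Real.log_mul (Real.exp_ne_zero _) (by positivity), Real.log_exp, Real.log_pow]
          have : ((N - 1 : ℕ) : ℝ) = (N:ℝ) - 1 := by
            have : 1 ≤ N := by omega
            push_cast [this]
            ring
          rw [this]
    _ ≤ Real.log Z1 := Real.log_le_log hpos hII
  -- conclude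
  rw [hZdef β1, hZdef β2, ← hZ1, ← hZ2]
  have h5 : β1 * Real.log Z2 ≤ β1 * (-(β2-β1)*μ + Real.log Z1) :=
    mul_le_mul_of_nonneg_left hlog2 hβ1.le
  have h6 : ((N:ℝ) - 1) * Real.log (1 + Real.exp (-β1*B1)) ≤ Real.log Z1 + β1*μ := by
    linarith [hlog1]
  have h7 : (β2 - β1) * (((N:ℝ) - 1) * Real.log (1 + Real.exp (-β1*B1))) ≤
      (β2 - β1) * (Real.log Z1 + β1*μ) :=
    mul_le_mul_of_nonneg_left h6 (by linarith)
  have h8 : β2 * Real.log Z1 - β1 * (-(β2-β1)*μ + Real.log Z1) =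
      (β2 - β1) * (Real.log Z1 + β1*μ) := by ring
  rw [hB1] at h7
  linarith [h5, h7, h8]

end Core

end S17
end S17aux

/-- Corollary `F`. If the topological pressure `Pr(-βJ)` exists for
every `β > 0`, with `J = log E'`, then `β ↦ Pr(-βJ)/β` is strictly decreasing on
`(0, ∞)`. -/
theorem statement17 (E : ExpandingCircleMap) (Pr : ℝ → ℝ)
    (hPr : ∀ β : ℝ, 0 < β →
      Filter.Tendsto
        (fun n : ℕ =>
          Real.log (∑' x : E.Fix n, Real.exp (-β * E.birkhoff E.J n x.1)) / n)
        Filter.atTop (𝓝 (Pr β))) :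
    StrictAntiOn (fun β : ℝ => Pr β / β) (Set.Ioi 0) := by
  intro β1 hβ1 β2 hβ2 h12
  simp only [Set.mem_Ioi] at hβ1 hβ2
  obtain ⟨m, hm1, hm⟩ := S17.exists_expansion E
  obtain ⟨K, hK0, hK⟩ := S17.exists_lipschitz E
  set ε₀ := Real.log (1 + Real.exp (-β1 * (K/(m-1)))) with hε₀
  have hε₀pos : 0 < ε₀ :=
    Real.log_pos (by linarith [Real.exp_pos (-β1 * (K/(m-1)))])
  have hA := hPr β1 hβ1
  have hB := hPr β2 hβ2
  have hlim1 : Filter.Tendsto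
      (fun n : ℕ =>
        β2 * (Real.log (∑' x : E.Fix n, Real.exp (-β1 * E.birkhoff E.J n x.1)) / n) -
        β1 * (Real.log (∑' x : E.Fix n, Real.exp (-β2 * E.birkhoff E.J n x.1)) / n))
      Filter.atTop (𝓝 (β2 * Pr β1 - β1 * Pr β2)) :=
    (hA.const_mul β2).sub (hB.const_mul β1)
  have hlim2 : Filter.Tendsto (fun n : ℕ => (β2-β1) * ε₀ * (1 - 1/(n:ℝ)))
      Filter.atTop (𝓝 ((β2-β1) * ε₀ * (1 - 0))) :=
    Filter.Tendsto.mul tendsto_const_nhds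
      (Filter.Tendsto.sub tendsto_const_nhds tendsto_one_div_atTop_nhds_zero_nat)
  have hineq : ∀ᶠ n : ℕ in Filter.atTop,
      (β2-β1) * ε₀ * (1 - 1/(n:ℝ)) ≤
        β2 * (Real.log (∑' x : E.Fix n, Real.exp (-β1 * E.birkhoff E.J n x.1)) / n) -
        β1 * (Real.log (∑' x : E.Fix n, Real.exp (-β2 * E.birkhoff E.J n x.1)) / n) := by
    filter_upwards [Filter.eventually_ge_atTop 2] with N hN
    have hk := S17.key_ineq hm1 hm hK0 hK β1 β2 hβ1 h12 N hN
    have hNpos : (0:ℝ) < (N:ℝ) := by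
      have : (2:ℝ) ≤ (N:ℝ) := by exact_mod_cast hN
      linarith
    set L1 := Real.log (∑' x : E.Fix N, Real.exp (-β1 * E.birkhoff E.J N x.1)) with hL1
    set L2 := Real.log (∑' x : E.Fix N, Real.exp (-β2 * E.birkhoff E.J N x.1)) with hL2
    have e1 : (β2-β1) * ε₀ * (1 - 1/(N:ℝ)) = (β2-β1) * (((N:ℝ)-1) * ε₀) / N := by
      field_simp
    have e2 : β2 * (L1/(N:ℝ)) - β1 * (L2/(N:ℝ)) = (β2 * L1 - β1 * L2) / N := by ring
    rw [e1, e2]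
    exact div_le_div_of_nonneg_right hk hNpos.le
  have hfinal := le_of_tendsto_of_tendsto hlim2 hlim1 hineq
  have hfinal' : (β2-β1) * ε₀ ≤ β2 * Pr β1 - β1 * Pr β2 := by
    have : (β2-β1) * ε₀ * (1 - 0) = (β2-β1) * ε₀ := by ring
    linarith [hfinal, this.symm.le, this.le]
  have hprod : 0 < (β2-β1) * ε₀ := mul_pos (by linarith) hε₀pos
  show Pr β2 / β2 < Pr β1 / β1
  rw [div_lt_div_iff₀ hβ2 hβ1]
  nlinarith [hfinal', hprod]


end
end
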